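/- arXiv:math/0301293 — 9 statements merged into one kernel-verified Lean document; each statement's English description precedes it below -/
import Mathlib

section
/- Let f : X → Y be a perfect surjective map between metrizable spaces, K a closed convex subset of a Banach space E, and for every y ∈ Y let 𝒞(y) ⊆ C*(X, K) be a set such that whenever h ∈ C*(X, K) restricts on f⁻¹(y) to the same map as some g ∈ 𝒞(y), then h ∈ 𝒞(y). Suppose that for every y ∈ Y and every g ∈ 𝒞(y) there exist a neighborhood V_y of y in Y and δ_y > 0 such that every h ∈ C*(X, K) whose restriction to f⁻¹(V_y) is δ_y-close to g|f⁻¹(V_y) belongs to 𝒞(V_y) = ∩_{y' ∈ V_y} 𝒞(y'). Then 𝒞(Y) = ∩_{y ∈ Y} 𝒞(y) is open in C*(X, K) with respect to the source limitation topology, and the set-valued map ψ : Y → C*(X, K) defined by ψ(y) = C*(X, K) ∖ 𝒞(y) has a closed graph when C*(X, K) is equipped with the uniform convergence topology. -/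
open Set Topology Metric BoundedContinuousFunction

noncomputable section

/-- Covering dimension at most `n` (for a natural number `n`): every finite open cover
has an open refinement covering the space such that every point belongs to at most
`n + 1` members of the refinement. -/
def CovDimLENat (X : Type*) [TopologicalSpace X] (n : ℕ) : Prop :=
  ∀ 𝒰 : Set (Set X), 𝒰.Finite → (∀ U ∈ 𝒰, IsOpen U) → ⋃₀ 𝒰 = Set.univ →
    ∃ 𝒱 : Set (Set X), (∀ V ∈ 𝒱, IsOpen V) ∧ ⋃₀ 𝒱 = Set.univ ∧
      (∀ V ∈ 𝒱, ∃ U ∈ 𝒰, V ⊆ U) ∧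
      ∀ x : X, {V ∈ 𝒱 | x ∈ V}.Finite ∧ {V ∈ 𝒱 | x ∈ V}.ncard ≤ n + 1

/-- Covering dimension at most `n` for an integer `n`; negative bounds mean the space
is empty (`dim ∅ = -1`). -/
def CovDimLE (X : Type*) [TopologicalSpace X] (n : ℤ) : Prop :=
  IsEmpty X ∨ ∃ k : ℕ, (k : ℤ) ≤ n ∧ CovDimLENat X k

/-- A space is finite-dimensional if its covering dimension is at most `n` for some `n`. -/
def FiniteDimSpace (X : Type*) [TopologicalSpace X] : Prop :=
  ∃ n : ℕ, CovDimLENat X n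

/-- A perfect map: continuous, closed, with compact fibers. -/
def IsPerfectMap {X Y : Type*} [TopologicalSpace X] [TopologicalSpace Y] (f : X → Y) : Prop :=
  Continuous f ∧ IsClosedMap f ∧ ∀ y : Y, IsCompact (f ⁻¹' {y})

/-- A σ-perfect map: `X` is a countable union of closed sets `A i` whose images are
closed and on which `f` restricts to a perfect map onto its image. -/
def IsSigmaPerfectMap {X Y : Type*} [TopologicalSpace X] [TopologicalSpace Y] (f : X → Y) :
    Prop :=
  Continuous f ∧ ∃ A : ℕ → Set X, (⋃ i, A i) = Set.univ ∧
    ∀ i, IsClosed (A i) ∧ IsClosed (f '' A i) ∧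
      IsPerfectMap (Set.MapsTo.restrict f (A i) (f '' A i) (Set.mapsTo_image f (A i)))

/-- `dim f ≤ k`: every fiber of `f` has covering dimension at most `k`. -/
def DimMapLE {X Y : Type*} [TopologicalSpace X] [TopologicalSpace Y] (f : X → Y) (k : ℤ) :
    Prop :=
  ∀ y : Y, CovDimLE (f ⁻¹' {y}) k

/-- `B_n(h)`: the set of points of the codomain having at least `n` preimages. -/
def BranchSet {X Z : Type*} (h : X → Z) (n : ℕ) : Set Z :=
  {z | ∃ S : Finset X, n ≤ S.card ∧ ∀ x ∈ S, h x = z}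

/-- The source limitation topology on the space of bounded continuous maps. -/
def sourceLimitation (X E : Type*) [TopologicalSpace X] [PseudoMetricSpace E] :
    TopologicalSpace (X →ᵇ E) where
  IsOpen U := ∀ g ∈ U, ∃ α : X → ℝ, Continuous α ∧ (∀ x, 0 < α x) ∧
    ∀ h : X →ᵇ E, (∀ x, dist (h x) (g x) ≤ α x) → h ∈ U
  isOpen_univ := fun g _ =>
    ⟨fun _ => 1, continuous_const, fun _ => one_pos, fun _ _ => trivial⟩
  isOpen_inter := by
    rintro U V hU hV g ⟨hgU, hgV⟩
    obtain ⟨α, hαc, hαp, hα⟩ := hU g hgU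
    obtain ⟨β, hβc, hβp, hβ⟩ := hV g hgV
    exact ⟨fun x => min (α x) (β x), hαc.min hβc, fun x => lt_min (hαp x) (hβp x),
      fun h hh => ⟨hα h fun x => (hh x).trans (min_le_left _ _),
        hβ h fun x => (hh x).trans (min_le_right _ _)⟩⟩
  isOpen_sUnion := by
    rintro S hS g ⟨U, hU, hgU⟩
    obtain ⟨α, hc, hp, h⟩ := hS U hU g hgU
    exact ⟨α, hc, hp, fun h' hh' => ⟨U, hU, h h' hh'⟩⟩

/-- A C-space. -/
def IsCSpace (Y : Type*) [TopologicalSpace Y] : Prop :=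
  ∀ 𝒰 : ℕ → Set (Set Y), (∀ n, (∀ U ∈ 𝒰 n, IsOpen U) ∧ ⋃₀ 𝒰 n = Set.univ) →
    ∃ 𝒱 : ℕ → Set (Set Y),
      (∀ n, (∀ V ∈ 𝒱 n, IsOpen V) ∧ (∀ V ∈ 𝒱 n, ∃ U ∈ 𝒰 n, V ⊆ U) ∧
        (𝒱 n).Pairwise (Disjoint · ·)) ∧
      ⋃₀ (⋃ n, 𝒱 n) = Set.univ

/-- `F` is a `Z_m`-set in `M`: `F` is closed and the maps from the `m`-cube avoiding `F`
are dense in `C(𝕀^m, M)` (uniform convergence topology). -/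
def IsZmSet (m : ℕ) {M : Type*} [TopologicalSpace M] (F : Set M) : Prop :=
  IsClosed F ∧ Dense {u : C((Fin m → unitInterval), M) | ∀ z, u z ∉ F}

/-- `F` is a `Z`-set in `M` if it is a `Z_m`-set for all `m`. -/
def IsZSet {M : Type*} [TopologicalSpace M] (F : Set M) : Prop :=
  ∀ m : ℕ, IsZmSet m F

end

/-- (Lemma 2.1) If each class `𝒞 y ⊆ C*(X, K)` is determined by
restrictions to the fiber `f⁻¹(y)` and is "uniformly locally stable", then
`𝒞(Y) = ⋂ y, 𝒞 y` is open in the source limitation topology, and the set-valued map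
`ψ(y) = C*(X,K) ∖ 𝒞(y)` has a closed graph for the uniform convergence topology. -/
theorem statement3 {X Y E : Type*} [TopologicalSpace X] [TopologicalSpace.MetrizableSpace X]
    [TopologicalSpace Y] [TopologicalSpace.MetrizableSpace Y]
    [NormedAddCommGroup E] [NormedSpace ℝ E] [CompleteSpace E]
    (K : Set E) (hKcl : IsClosed K) (hKcv : Convex ℝ K)
    (f : X → Y) (hf : IsPerfectMap f) (hfsurj : Function.Surjective f)
    (𝒞 : Y → Set (X →ᵇ ↥K))
    (hdet : ∀ y : Y, ∀ g ∈ 𝒞 y, ∀ h : X →ᵇ ↥K,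
      (∀ x ∈ f ⁻¹' {y}, h x = g x) → h ∈ 𝒞 y)
    (hloc : ∀ y : Y, ∀ g ∈ 𝒞 y, ∃ V : Set Y, IsOpen V ∧ y ∈ V ∧ ∃ δ : ℝ, 0 < δ ∧
      ∀ h : X →ᵇ ↥K, (∀ x ∈ f ⁻¹' V, dist (h x) (g x) ≤ δ) → ∀ y' ∈ V, h ∈ 𝒞 y') :
    @IsOpen _ (sourceLimitation X ↥K) (⋂ y, 𝒞 y) ∧
      IsClosed {q : Y × (X →ᵇ ↥K) | q.2 ∉ 𝒞 q.1} := by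
  letI : MetricSpace Y := TopologicalSpace.metrizableSpaceMetric Y
  constructor
  · -- openness in the source limitation topology
    intro g hg
    have hgy : ∀ y, g ∈ 𝒞 y := fun y => mem_iInter.1 hg y
    choose V hVo hVm δ hδpos hδ using fun y => hloc y g (hgy y)
    -- construct a continuous ε : Y → ℝ with ε y ∈ t y
    set t : Y → Set ℝ := fun y => {r : ℝ | 0 < r ∧ ∃ y₀, y ∈ V y₀ ∧ r < δ y₀} with ht_def
    have htconv : ∀ y, Convex ℝ (t y) := by
      intro y
      rintro a ⟨ha0, y₁, hy₁, ha⟩ b ⟨hb0, y₂, hy₂, hb⟩ p q hp hq hpq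
      refine ⟨convex_Ioi (0 : ℝ) ha0 hb0 hp hq hpq, ?_⟩
      rcases le_total (δ y₁) (δ y₂) with hle | hle
      · exact ⟨y₂, hy₂, convex_Iio (δ y₂) (ha.trans_le hle) hb hp hq hpq⟩
      · exact ⟨y₁, hy₁, convex_Iio (δ y₁) ha (hb.trans_le hle) hp hq hpq⟩
    have hH : ∀ y : Y, ∃ c : ℝ, ∀ᶠ y' in 𝓝 y, c ∈ t y' := by
      intro y
      refine ⟨δ y / 2, ?_⟩
      filter_upwards [(hVo y).mem_nhds (hVm y)] with y' hy'
      exact ⟨half_pos (hδpos y), y, hy', half_lt_self (hδpos y)⟩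
    obtain ⟨ε, hε⟩ := exists_continuous_forall_mem_convex_of_local_const htconv hH
    refine ⟨fun x => ε (f x), ε.continuous.comp hf.1, fun x => (hε (f x)).1, ?_⟩
    intro h hh
    refine mem_iInter.2 fun y => ?_
    obtain ⟨-, y₀, hyV, hlt⟩ := hε y
    -- the open set where ε < δ y₀ inside V y₀
    set B : Set Y := V y₀ ∩ ε ⁻¹' Iio (δ y₀) with hB_def
    have hBo : IsOpen B := (hVo y₀).inter (isOpen_Iio.preimage ε.continuous)
    have hyB : y ∈ B := ⟨hyV, hlt⟩
    obtain ⟨φ, hφ0, hφ1, hφ01⟩ :=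
      exists_continuous_zero_one_of_isClosed hBo.isClosed_compl isClosed_singleton
        (disjoint_compl_left_iff_subset.2 (singleton_subset_iff.2 hyB))
    -- the modified map h'
    set u : X → E := fun x => φ (f x) • ((h x : E)) + (1 - φ (f x)) • ((g x : E)) with hu_def
    have humem : ∀ x, u x ∈ K := fun x =>
      hKcv (h x).2 (g x).2 (hφ01 (f x)).1 (by linarith [(hφ01 (f x)).2]) (by ring)
    have hkey : ∀ x, dist (u x) ((g x : E)) = φ (f x) * dist ((h x : E)) ((g x : E)) := by
      intro x
      have : u x - (g x : E) = φ (f x) • ((h x : E) - (g x : E)) := by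
        simp only [hu_def]; module
      rw [dist_eq_norm, this, norm_smul, Real.norm_of_nonneg (hφ01 (f x)).1, ← dist_eq_norm]
    have hle1 : ∀ x, dist (u x) ((g x : E)) ≤ dist ((h x : E)) ((g x : E)) := by
      intro x
      rw [hkey x]
      calc φ (f x) * dist ((h x : E)) ((g x : E)) ≤ 1 * dist ((h x : E)) ((g x : E)) :=
            mul_le_mul_of_nonneg_right (hφ01 (f x)).2 dist_nonneg
        _ = _ := one_mul _
    have hcont : Continuous u := by
      have h1 : Continuous fun x => φ (f x) := φ.continuous.comp hf.1
      exact (h1.smul (continuous_subtype_val.comp h.continuous)).add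
        ((continuous_const.sub h1).smul (continuous_subtype_val.comp g.continuous))
    set h' : X →ᵇ ↥K :=
      { toFun := fun x => (⟨u x, humem x⟩ : ↥K)
        continuous_toFun := hcont.subtype_mk _
        map_bounded' := by
          obtain ⟨C, hC⟩ := g.map_bounded'
          refine ⟨dist h g + C + dist h g, fun x x' => ?_⟩
          have e1 := hle1 x
          have e2 := hle1 x'
          have d1 : dist ((h x : E)) ((g x : E)) ≤ dist h g := by
            rw [← Subtype.dist_eq]; exact h.dist_coe_le_dist x
          have d2 : dist ((h x' : E)) ((g x' : E)) ≤ dist h g := by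
            rw [← Subtype.dist_eq]; exact h.dist_coe_le_dist x'
          have dg : dist ((g x : E)) ((g x' : E)) ≤ C := by
            rw [← Subtype.dist_eq]; exact hC x x'
          calc dist ((⟨u x, humem x⟩ : ↥K)) (⟨u x', humem x'⟩ : ↥K)
              = dist (u x) (u x') := Subtype.dist_eq _ _
            _ ≤ dist (u x) ((g x : E)) + dist ((g x : E)) ((g x' : E))
                  + dist ((g x' : E)) (u x') := dist_triangle4 _ _ _ _
            _ ≤ dist h g + C + dist h g := by
                have := dist_comm ((g x' : E)) (u x') ▸ e2
                exact add_le_add (add_le_add (e1.trans d1) dg) (this.trans d2) }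
    have hh'mem : ∀ x ∈ f ⁻¹' V y₀, dist (h' x) (g x) ≤ δ y₀ := by
      intro x hx
      rw [Subtype.dist_eq]
      show dist (u x) ((g x : E)) ≤ δ y₀
      by_cases hxB : f x ∈ B
      · refine (hle1 x).trans ?_
        have : dist (h x) (g x) ≤ ε (f x) := hh x
        rw [Subtype.dist_eq] at this
        exact this.trans (le_of_lt hxB.2)
      · rw [hkey x, hφ0 hxB, Pi.zero_apply, zero_mul]
        exact (hδpos y₀).le
    have h'C : h' ∈ 𝒞 y := hδ y₀ h' hh'mem y hyV
    refine hdet y h' h'C h fun x hx => ?_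
    have hx1 : φ (f x) = 1 := hφ1 hx
    apply Subtype.ext
    show (h x : E) = u x
    simp [hu_def, hx1]
  · -- closed graph
    rw [← isOpen_compl_iff]
    have hcompl : {q : Y × (X →ᵇ ↥K) | q.2 ∉ 𝒞 q.1}ᶜ = {q : Y × (X →ᵇ ↥K) | q.2 ∈ 𝒞 q.1} := by
      ext q; simp
    rw [hcompl, isOpen_iff_forall_mem_open]
    rintro ⟨y, h⟩ hyh
    obtain ⟨V, hVo, hyV, δ, hδpos, hδ⟩ := hloc y h hyh
    refine ⟨V ×ˢ Metric.ball h δ, ?_, hVo.prod Metric.isOpen_ball, ⟨hyV, Metric.mem_ball_self hδpos⟩⟩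
    rintro ⟨y', h'⟩ ⟨hy', hball⟩
    exact hδ h' (fun x _ => ((h'.dist_coe_le_dist x).trans (le_of_lt hball))) y' hy'
end

section
/- Let f : X → Y be a perfect surjective map between metrizable spaces, K a closed convex subset of a Banach space E, and for every y ∈ Y let 𝒞(y) ⊆ C*(X, K) be a set such that whenever h ∈ C*(X, K) restricts on f⁻¹(y) to the same map as some g ∈ 𝒞(y), then h ∈ 𝒞(y); let ψ(y) = C*(X, K) ∖ 𝒞(y). Fix y ∈ Y and suppose that for every k ∈ ℕ (respectively, for k = m) the set of all maps h ∈ C(𝕀^k × f⁻¹(y), K) with h|({z} × f⁻¹(y)) ∈ 𝒞(y) for each z ∈ 𝕀^k is dense in C(𝕀^k × f⁻¹(y), K) with respect to the uniform convergence topology. If ψ(y) is closed in C*(X, K), then for every continuous function α : X → (0,∞) and every g ∈ C*(X, K), the set ψ(y) ∩ B̄(g, α) is a Z-set (respectively, a Z_m-set) in B̄(g, α), where B̄(g, α) = {h ∈ C*(X, K) : d(g(x), h(x)) ≤ α(x) for all x ∈ X} is considered as a subspace of C*(X, K) equipped with the uniform convergence topology. -/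
open Set Topology Metric BoundedContinuousFunction

/-!
Given a cube of maps `u : 𝕀^m → B̄(g, α)` and `ε > 0`, first push every `u z` towards `g` by the
factor `min(α, ε/3)/α`; this leaves room `min(α, ε/3)` inside `B̄(g, α)` at every point. The
density hypothesis approximates the restriction of the pushed family to `𝕀^m × f⁻¹(y)` by a
family whose slices are restrictions of members of `𝒞(y)`. A Dugundji extension operator is
1-Lipschitz for the sup metric, so it extends these slices continuously in `z`. Gluing the
extension to the pushed family by a Urysohn function equal to `1` on `f⁻¹(y)` and vanishing where
the two are not closer than the room (a closed set, because `𝕀^m` is compact) gives maps that stay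
in `B̄(g, α)`, are `ε`-close to `u`, and lie in `𝒞(y)` because membership is decided on `f⁻¹(y)`.
-/

section DugundjiExtension

variable {X E : Type*} [MetricSpace X] [NormedAddCommGroup E] [NormedSpace ℝ E] {F : Set X}

namespace Dugundji

def cover (F : Set X) (q : ↥Fᶜ) : Set ↥Fᶜ :=
  {p | dist (p : X) q < infDist (q : X) F / 2}

theorem isOpen_cover (q : ↥Fᶜ) : IsOpen (cover F q) :=
  isOpen_lt (by fun_prop) continuous_const

theorem iUnion_cover (hF : IsClosed F) (hne : F.Nonempty) : ⋃ q, cover F q = univ :=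
  eq_univ_of_forall fun p => mem_iUnion.2
    ⟨p, by simpa [cover] using (hF.notMem_iff_infDist_pos hne).1 p.2⟩

theorem infDist_lt_two_mul_of_mem_cover {p q : ↥Fᶜ} (h : p ∈ cover F q) :
    infDist (q : X) F < 2 * infDist (p : X) F := by
  have h' : dist (p : X) q < infDist (q : X) F / 2 := h
  linarith [infDist_le_infDist_add_dist (x := (q : X)) (y := (p : X)) (s := F), dist_comm (p : X) q]

/-- The points `a q` are almost nearest points of `F`, so that near `F` the averages defining
`extend` only involve values of `c` at nearby points. -/
structure Data (F : Set X) where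
  ρ : PartitionOfUnity ↥Fᶜ ↥Fᶜ univ
  a : ↥Fᶜ → F
  isSubordinate : ρ.IsSubordinate (cover F)
  dist_lt : ∀ q : ↥Fᶜ, dist (q : X) (a q) < 2 * infDist (q : X) F

namespace Data

theorem nonempty (hF : IsClosed F) (hne : F.Nonempty) : Nonempty (Data F) := by
  obtain ⟨ρ, hρ⟩ := PartitionOfUnity.exists_isSubordinate isClosed_univ (cover F)
    isOpen_cover (iUnion_cover hF hne).ge
  have : ∀ q : ↥Fᶜ, ∃ b : F, dist (q : X) b < 2 * infDist (q : X) F := fun q => by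
    obtain ⟨b, hb, h⟩ := (infDist_lt_iff hne).1
      (lt_two_mul_self ((hF.notMem_iff_infDist_pos hne).1 q.2))
    exact ⟨⟨b, hb⟩, h⟩
  choose a ha using this
  exact ⟨⟨ρ, a, hρ, ha⟩⟩

variable (D : Data F)

open scoped Classical in
noncomputable def extend (c : F → E) (x : X) : E :=
  if hx : x ∈ F then c ⟨x, hx⟩ else ∑ᶠ q, D.ρ q ⟨x, hx⟩ • c (D.a q)

theorem extend_of_mem (c : F → E) {x : X} (hx : x ∈ F) : D.extend c x = c ⟨x, hx⟩ :=
  dif_pos hx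

theorem extend_of_notMem (c : F → E) {x : X} (hx : x ∉ F) :
    D.extend c x = ∑ᶠ q, D.ρ q ⟨x, hx⟩ • c (D.a q) :=
  dif_neg hx

theorem extend_sub (c c' : F → E) (x : X) :
    D.extend c x - D.extend c' x = D.extend (c - c') x := by
  by_cases hx : x ∈ F
  · simp only [extend_of_mem _ _ hx, Pi.sub_apply]
  · simp only [extend_of_notMem _ _ hx]
    rw [← D.ρ.sum_finsupport_smul_eq_finsum fun q _ => c (D.a q),
      ← D.ρ.sum_finsupport_smul_eq_finsum fun q _ => c' (D.a q),
      ← D.ρ.sum_finsupport_smul_eq_finsum fun q _ => (c - c') (D.a q),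
      ← Finset.sum_sub_distrib]
    simp only [Pi.sub_apply, smul_sub]

theorem dist_lt_five_mul_infDist {p q : ↥Fᶜ} (h : D.ρ q p ≠ 0) :
    dist (D.a q : X) p < 5 * infDist (p : X) F := by
  have hpq : p ∈ cover F q := D.isSubordinate q (subset_tsupport _ (Function.mem_support.2 h))
  have hpq' : dist (p : X) q < infDist (q : X) F / 2 := hpq
  linarith [infDist_lt_two_mul_of_mem_cover hpq, dist_triangle (D.a q : X) q p,
    dist_comm (D.a q : X) q, dist_comm (p : X) q, D.dist_lt q]

theorem extend_mem {T : Set E} (hT : Convex ℝ T) {c : F → E} {x : X}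
    (hc : ∀ b : F, dist (b : X) x ≤ 5 * infDist x F → c b ∈ T) : D.extend c x ∈ T := by
  by_cases hx : x ∈ F
  · rw [extend_of_mem _ c hx]
    exact hc _ (by simp [infDist_zero_of_mem hx])
  · rw [extend_of_notMem _ c hx]
    exact D.ρ.finsum_smul_mem_convex (g := fun q _ => c (D.a q)) (mem_univ _)
      (fun q hq => hc _ (D.dist_lt_five_mul_infDist hq).le) hT

theorem dist_extend_le {c c' : F → E} {r : ℝ} (h : ∀ b, dist (c b) (c' b) ≤ r) (x : X) :
    dist (D.extend c x) (D.extend c' x) ≤ r := by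
  rw [dist_eq_norm, extend_sub, ← mem_closedBall_zero_iff]
  exact D.extend_mem (convex_closedBall 0 r) fun b _ => by simpa [dist_eq_norm] using h b

theorem continuous_extend (hF : IsClosed F) {c : F → E} (hc : Continuous c) :
    Continuous (D.extend c) := by
  refine continuous_iff_continuousAt.2 fun x => ?_
  by_cases hx : x ∈ F
  · refine Metric.continuousAt_iff.2 fun ε hε => ?_
    obtain ⟨δ, hδ, hcδ⟩ := Metric.continuousAt_iff.1 (hc.continuousAt (x := ⟨x, hx⟩)) _
      (half_pos hε)
    refine ⟨δ / 6, by positivity, fun x' hx' => ?_⟩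
    have hx'F : infDist x' F ≤ dist x' x := infDist_le_dist_of_mem hx
    have : D.extend c x' ∈ closedBall (c ⟨x, hx⟩) (ε / 2) :=
      D.extend_mem (convex_closedBall _ _) fun b hb =>
        (hcδ (by linarith [dist_triangle (b : X) x' x, Subtype.dist_eq b ⟨x, hx⟩])).le
    rw [extend_of_mem _ c hx]
    exact (mem_closedBall.1 this).trans_lt (half_lt_self hε)
  · have : ContinuousOn (D.extend c) Fᶜ := by
      rw [continuousOn_iff_continuous_domRestrict]
      have hrestr : Fᶜ.domRestrict (D.extend c) = fun p => ∑ᶠ q, D.ρ q p • c (D.a q) :=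
        funext fun p => D.extend_of_notMem c p.2
      rw [hrestr]
      exact D.ρ.continuous_finsum_smul fun q p _ => continuousAt_const
    exact this.continuousAt (hF.isOpen_compl.mem_nhds hx)

end Data

end Dugundji

theorem exists_extension_lipschitzWith_one (hF : IsClosed F) (hne : F.Nonempty) {K : Set E}
    (hK : Convex ℝ K) :
    ∃ R : (F →ᵇ K) → (X →ᵇ K), LipschitzWith 1 R ∧ ∀ c (b : F), R c b = c b := by
  obtain ⟨D⟩ := Dugundji.Data.nonempty hF hne
  let R (c : F →ᵇ K) : X →ᵇ K :=
    ⟨⟨fun x => ⟨D.extend (fun b => (c b : E)) x, D.extend_mem hK fun b _ => (c b).2⟩,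
      (D.continuous_extend hF (by fun_prop)).subtype_mk _⟩, by
      obtain ⟨C, hC⟩ := c.bounded
      obtain ⟨b₀⟩ := hne.to_subtype
      have hmem x : D.extend (fun b => (c b : E)) x ∈ closedBall (c b₀ : E) C :=
        D.extend_mem (convex_closedBall _ _) fun b _ => hC b b₀
      exact ⟨2 * C, fun x y => (dist_triangle_right _ _ (c b₀ : E)).trans
        (by linarith [mem_closedBall.1 (hmem x), mem_closedBall.1 (hmem y)])⟩⟩
  have hR c x : (R c x : E) = D.extend (fun b => (c b : E)) x := rfl
  refine ⟨R, LipschitzWith.of_dist_le_mul fun c c' => ?_, fun c b => ?_⟩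
  · rw [NNReal.coe_one, one_mul, dist_le dist_nonneg]
    intro x
    rw [Subtype.dist_eq, hR, hR]
    exact D.dist_extend_le (fun b => dist_coe_le_dist (f := c) (g := c') b) x
  · exact Subtype.ext ((hR c b).trans (D.extend_of_mem _ b.2))

end DugundjiExtension

namespace BoundedContinuousFunction

variable {X E : Type*} [TopologicalSpace X] [NormedAddCommGroup E] [NormedSpace ℝ E] {K : Set E}

def convexLineMap (hK : Convex ℝ K) (s : C(X, ℝ)) (hs : ∀ x, s x ∈ Icc (0 : ℝ) 1)
    (h₀ h₁ : X →ᵇ K) : X →ᵇ K :=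
  ⟨⟨fun x => ⟨AffineMap.lineMap (h₀ x : E) (h₁ x) (s x),
      hK.lineMap_mem (h₀ x).2 (h₁ x).2 (hs x)⟩,
    (continuous_iff_continuousAt.2 fun x => by fun_prop).subtype_mk _⟩, by
    obtain ⟨C, hC⟩ := h₀.bounded
    refine ⟨dist h₀ h₁ + C + dist h₀ h₁, fun x y => ?_⟩
    have hend z :
        dist (AffineMap.lineMap (h₀ z : E) (h₁ z) (s z)) (h₀ z : E) ≤ dist h₀ h₁ := by
      rw [dist_lineMap_left, Real.norm_of_nonneg (hs z).1]
      exact (mul_le_of_le_one_left dist_nonneg (hs z).2).trans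
        (dist_coe_le_dist (f := h₀) (g := h₁) z)
    exact (dist_triangle4 _ (h₀ x : E) (h₀ y) _).trans (add_le_add_three (hend x) (hC x y)
      ((dist_comm _ _).trans_le (hend y)))⟩

variable (hK : Convex ℝ K) (s : C(X, ℝ)) (hs : ∀ x, s x ∈ Icc (0 : ℝ) 1)

@[simp]
theorem convexLineMap_apply (h₀ h₁ : X →ᵇ K) (x : X) :
    (convexLineMap hK s hs h₀ h₁ x : E) = AffineMap.lineMap (h₀ x : E) (h₁ x) (s x) :=
  rfl

theorem dist_convexLineMap_le (h₀ h₁ h₀' h₁' : X →ᵇ K) :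
    dist (convexLineMap hK s hs h₀ h₁) (convexLineMap hK s hs h₀' h₁') ≤
      max (dist h₀ h₀') (dist h₁ h₁') := by
  refine (dist_le (le_max_of_le_left dist_nonneg)).2 fun x => ?_
  rw [Subtype.dist_eq, convexLineMap_apply, convexLineMap_apply, dist_eq_norm_vsub,
    AffineMap.lineMap_vsub_lineMap, ← mem_closedBall_zero_iff]
  refine (convex_closedBall 0 _).lineMap_mem ?_ ?_ (hs x) <;>
    rw [mem_closedBall_zero_iff, ← dist_eq_norm_vsub]
  · exact (dist_coe_le_dist (f := h₀) (g := h₀') x).trans (le_max_left _ _)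
  · exact (dist_coe_le_dist (f := h₁) (g := h₁') x).trans (le_max_right _ _)

theorem lipschitzWith_convexLineMap :
    LipschitzWith 1 fun p : (X →ᵇ K) × (X →ᵇ K) => convexLineMap hK s hs p.1 p.2 :=
  LipschitzWith.of_dist_le_mul fun p p' => by
    simpa [Prod.dist_eq] using dist_convexLineMap_le hK s hs p.1 p.2 p'.1 p'.2

end BoundedContinuousFunction

section Approximation

variable {X E : Type*} [NormedAddCommGroup E] [NormedSpace ℝ E] {K : Set E}
  {Q : Type*} [TopologicalSpace Q]

theorem exists_shrink_toward [TopologicalSpace X] (hK : Convex ℝ K) (g : X →ᵇ K) {α : X → ℝ}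
    (hα : Continuous α) (hαpos : ∀ x, 0 < α x) {η : ℝ} (hη : 0 < η) :
    ∃ S : (X →ᵇ K) → (X →ᵇ K), LipschitzWith 1 S ∧ ∀ h : X →ᵇ K,
      (∀ x, dist (h x) (g x) ≤ α x) →
        dist (S h) h ≤ η ∧ ∀ x, dist (S h x) (g x) ≤ α x - min (α x) η := by
  let s : C(X, ℝ) := ⟨fun x => min (α x) η / α x,
    (hα.min continuous_const).div hα fun x => (hαpos x).ne'⟩
  have hs x : s x ∈ Icc (0 : ℝ) 1 :=
    ⟨div_nonneg (le_min (hαpos x).le hη.le) (hαpos x).le,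
      div_le_one_of_le₀ (min_le_left _ _) (hαpos x).le⟩
  have hsα x : s x * α x = min (α x) η := div_mul_cancel₀ _ (hαpos x).ne'
  refine ⟨fun h => convexLineMap hK s hs h g, LipschitzWith.of_dist_le_mul fun h h' => ?_,
    fun h hh => ⟨(dist_le hη.le).2 fun x => ?_, fun x => ?_⟩⟩
  · simpa using dist_convexLineMap_le hK s hs h g h' g
  · rw [Subtype.dist_eq, convexLineMap_apply, dist_lineMap_left, Real.norm_of_nonneg (hs x).1]
    calc s x * dist (h x : E) (g x) ≤ s x * α x := mul_le_mul_of_nonneg_left (hh x) (hs x).1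
      _ ≤ η := (hsα x).trans_le (min_le_right _ _)
  · rw [Subtype.dist_eq, convexLineMap_apply, dist_lineMap_right,
      Real.norm_of_nonneg (sub_nonneg.2 (hs x).2)]
    calc (1 - s x) * dist (h x : E) (g x) ≤ (1 - s x) * α x :=
          mul_le_mul_of_nonneg_left (hh x) (sub_nonneg.2 (hs x).2)
      _ = α x - min (α x) η := by rw [sub_mul, one_mul, hsα]

theorem isOpen_setOf_forall_of_compactSpace [TopologicalSpace X] [CompactSpace Q]
    {U : Set (Q × X)} (hU : IsOpen U) : IsOpen {x | ∀ z, (z, x) ∈ U} := by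
  have : {x | ∀ z, (z, x) ∈ U}ᶜ = Prod.snd '' Uᶜ := by
    ext x
    simp
  rw [← isClosed_compl_iff, this]
  exact isClosedMap_snd_of_compactSpace _ hU.isClosed_compl

theorem exists_glue [TopologicalSpace X] [NormalSpace X] {F G : Set X} (hF : IsClosed F)
    (hG : IsOpen G) (hFG : F ⊆ G) (hK : Convex ℝ K) (u W : C(Q, X →ᵇ K)) :
    ∃ v : C(Q, X →ᵇ K), (∀ z, ∀ b ∈ F, v z b = W z b) ∧
      ∀ z x {T : Set E}, Convex ℝ T → (u z x : E) ∈ T → (x ∈ G → (W z x : E) ∈ T) →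
        (v z x : E) ∈ T := by
  obtain ⟨lam, hlam0, hlam1, hlamI⟩ := exists_continuous_zero_one_of_isClosed
    hG.isClosed_compl hF (disjoint_compl_left_iff_subset.2 hFG)
  refine ⟨⟨fun z => convexLineMap hK lam hlamI (u z) (W z),
      (lipschitzWith_convexLineMap hK lam hlamI).continuous.comp
        (u.continuous.prodMk W.continuous)⟩,
    fun z b hb => Subtype.ext ?_, fun z x T hT hu hW => ?_⟩
  · rw [ContinuousMap.coe_mk, convexLineMap_apply, hlam1 hb, Pi.one_apply,
      AffineMap.lineMap_apply_one]
  · by_cases hx : x ∈ G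
    · exact hT.lineMap_mem hu (hW hx) (hlamI x)
    · rwa [ContinuousMap.coe_mk, convexLineMap_apply, hlam0 hx, Pi.zero_apply,
        AffineMap.lineMap_apply_zero]

theorem exists_continuous_extend_slices [MetricSpace X] {F : Set X} (hF : IsCompact F)
    (hne : F.Nonempty) (hK : Convex ℝ K) (w : C(Q × F, K)) :
    ∃ W : C(Q, X →ᵇ K), ∀ z (b : F), W z b = w (z, b) := by
  have : CompactSpace F := isCompact_iff_compactSpace.mp hF
  obtain ⟨R, hR, hRF⟩ := exists_extension_lipschitzWith_one hF.isClosed hne hK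
  exact ⟨⟨fun z => R (ContinuousMap.isometryEquivBoundedOfCompact F K (w.curry z)),
    hR.continuous.comp ((ContinuousMap.isometryEquivBoundedOfCompact F K).continuous.comp
      w.curry.continuous)⟩, fun z b => hRF _ b⟩

theorem dense_setOf_forall_mem_of_dense_slices [MetricSpace X] [CompactSpace Q]
    (hK : Convex ℝ K) {F : Set X} (hF : IsCompact F) (hne : F.Nonempty) {𝒞 : Set (X →ᵇ K)}
    (hdet : ∀ g ∈ 𝒞, ∀ h : X →ᵇ K, (∀ x ∈ F, h x = g x) → h ∈ 𝒞)
    (hdense : Dense {w : C(Q × F, K) | ∀ z, ∃ g' ∈ 𝒞, ∀ b : F, g' b = w (z, b)})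
    {α : X → ℝ} (hα : Continuous α) (hαpos : ∀ x, 0 < α x) (g : X →ᵇ K) :
    Dense {v : C(Q, {h : X →ᵇ K | ∀ x, dist (h x) (g x) ≤ α x}) |
      ∀ z, (v z : X →ᵇ K) ∈ 𝒞} := by
  have : CompactSpace F := isCompact_iff_compactSpace.mp hF
  refine Metric.dense_iff.2 fun u ε hε => ?_
  have hη : 0 < ε / 3 := by positivity
  let σ x := min (α x) (ε / 3)
  have hσ : Continuous σ := hα.min continuous_const
  obtain ⟨b₀, -, hσmin⟩ := hF.exists_isMinOn hne hσ.continuousOn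
  obtain ⟨S, hSlip, hS⟩ := exists_shrink_toward hK g hα hαpos hη
  let u' : C(Q, X →ᵇ K) := ⟨fun z => S (u z), hSlip.continuous.comp (by fun_prop)⟩
  let u'F : C(Q × F, K) := ⟨fun p => u' p.1 p.2, by fun_prop⟩
  obtain ⟨w, hw, hw𝒞⟩ := Metric.dense_iff.1 hdense u'F (σ b₀) (lt_min (hαpos b₀) hη)
  obtain ⟨W, hW⟩ := exists_continuous_extend_slices hF hne hK w
  let G := {x | ∀ z, (z, x) ∈ {p : Q × X | dist (W p.1 p.2) (u' p.1 p.2) < σ p.2}}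
  have hFG : F ⊆ G := fun b hb z => by
    rw [mem_ofPred_eq, hW z ⟨b, hb⟩]
    exact ((ContinuousMap.dist_apply_le_dist (z, ⟨b, hb⟩)).trans_lt (mem_ball.1 hw)).trans_le
      (hσmin hb)
  obtain ⟨v, hvF, hvT⟩ := exists_glue hF.isClosed
    (isOpen_setOf_forall_of_compactSpace (isOpen_lt (by fun_prop) (by fun_prop))) hFG hK u' W
  have hv_u' z : dist (v z) (u' z) ≤ ε / 3 := (dist_le hη.le).2 fun x =>
    hvT z x (convex_closedBall _ _) (mem_closedBall_self hη.le)
      fun hx => (mem_ball.1 (hx z)).le.trans (min_le_right _ _)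
  have hvB z x : dist (v z x) (g x) ≤ α x := by
    have hu'g : dist (u' z x : E) (g x) ≤ α x - σ x := (hS (u z) (u z).2).2 x
    refine hvT z x (convex_closedBall (g x : E) (α x))
      (hu'g.trans (sub_le_self _ (le_min (hαpos x).le hη.le))) fun hx => ?_
    have hWu' : dist (W z x : E) (u' z x) < σ x := hx z
    rw [mem_closedBall]
    linarith [dist_triangle (W z x : E) (u' z x) (g x)]
  refine ⟨⟨fun z => ⟨v z, hvB z⟩, by fun_prop⟩, mem_ball.2 ?_, fun z => ?_⟩
  · refine lt_of_le_of_lt ((ContinuousMap.dist_le (by positivity)).2 fun z => ?_)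
      (by linarith : 2 * (ε / 3) < ε)
    calc dist (v z) (u z : X →ᵇ K)
        ≤ dist (v z) (u' z) + dist (u' z) (u z) := dist_triangle _ _ _
      _ ≤ ε / 3 + ε / 3 := add_le_add (hv_u' z) (hS (u z) (u z).2).1
      _ = 2 * (ε / 3) := by ring
  · obtain ⟨g', hg', hg'w⟩ := hw𝒞 z
    exact hdet g' hg' (v z) fun x hx => by rw [hvF z x hx, hW z ⟨x, hx⟩, hg'w ⟨x, hx⟩]

theorem isZmSet_preimage_compl_of_dense_slices [MetricSpace X] (m : ℕ) (hK : Convex ℝ K)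
    {F : Set X} (hF : IsCompact F) (hne : F.Nonempty) {𝒞 : Set (X →ᵇ K)}
    (hdet : ∀ g ∈ 𝒞, ∀ h : X →ᵇ K, (∀ x ∈ F, h x = g x) → h ∈ 𝒞) (hψ : IsClosed 𝒞ᶜ)
    (hdense : Dense {w : C((Fin m → unitInterval) × F, K) |
      ∀ z, ∃ g' ∈ 𝒞, ∀ b : F, g' b = w (z, b)})
    {α : X → ℝ} (hα : Continuous α) (hαpos : ∀ x, 0 < α x) (g : X →ᵇ K) :
    IsZmSet m (Subtype.val ⁻¹' 𝒞ᶜ : Set {h : X →ᵇ K | ∀ x, dist (h x) (g x) ≤ α x}) := by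
  refine ⟨hψ.preimage continuous_subtype_val, Dense.mono ?_
    (dense_setOf_forall_mem_of_dense_slices hK hF hne hdet hdense hα hαpos g)⟩
  exact fun _ hv z hz => hz (hv z)

end Approximation

theorem statement4_general {X Y E : Type*} [TopologicalSpace X] [TopologicalSpace.MetrizableSpace X]
    [TopologicalSpace Y]
    [NormedAddCommGroup E] [NormedSpace ℝ E]
    (K : Set E) (hKcv : Convex ℝ K)
    (f : X → Y) (hf : IsPerfectMap f) (hfsurj : Function.Surjective f)
    (𝒞 : Y → Set (X →ᵇ ↥K))
    (hdet : ∀ y : Y, ∀ g ∈ 𝒞 y, ∀ h : X →ᵇ ↥K,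
      (∀ x ∈ f ⁻¹' {y}, h x = g x) → h ∈ 𝒞 y)
    (y : Y) (hψ : IsClosed ((𝒞 y)ᶜ)) :
    ((∀ k : ℕ, Dense {u : C((Fin k → unitInterval) × ↥(f ⁻¹' {y}), ↥K) |
        ∀ z : Fin k → unitInterval, ∃ g' ∈ 𝒞 y, ∀ x : ↥(f ⁻¹' {y}), g' ↑x = u (z, x)}) →
      ∀ (α : X → ℝ), Continuous α → (∀ x, 0 < α x) → ∀ g : X →ᵇ ↥K,
        IsZSet (Subtype.val ⁻¹' (𝒞 y)ᶜ :
          Set ↥{h : X →ᵇ ↥K | ∀ x, dist (h x) (g x) ≤ α x})) ∧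
    (∀ m : ℕ, Dense {u : C((Fin m → unitInterval) × ↥(f ⁻¹' {y}), ↥K) |
        ∀ z : Fin m → unitInterval, ∃ g' ∈ 𝒞 y, ∀ x : ↥(f ⁻¹' {y}), g' ↑x = u (z, x)} →
      ∀ (α : X → ℝ), Continuous α → (∀ x, 0 < α x) → ∀ g : X →ᵇ ↥K,
        IsZmSet m (Subtype.val ⁻¹' (𝒞 y)ᶜ :
          Set ↥{h : X →ᵇ ↥K | ∀ x, dist (h x) (g x) ≤ α x})) := by
  let : MetricSpace X := TopologicalSpace.metrizableSpaceMetric X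
  have hfiber : IsCompact (f ⁻¹' {y}) := hf.2.2 y
  exact ⟨fun hdense α hα hαpos g m => isZmSet_preimage_compl_of_dense_slices m hKcv hfiber
      (hfsurj y) (hdet y) hψ (hdense m) hα hαpos g,
    fun m hdense α hα hαpos g => isZmSet_preimage_compl_of_dense_slices m hKcv hfiber
      (hfsurj y) (hdet y) hψ hdense hα hαpos g⟩

/-- (Lemma 2.2) If the maps on `𝕀^k × f⁻¹(y)` all of whose slices lie in
the class `𝒞 y` are uniformly dense (for every `k`, resp. for `k = m`), and
`ψ(y) = 𝒞(y)ᶜ` is closed, then for every `g` and every continuous `α : X → (0,∞)` the set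
`ψ(y) ∩ B̄(g,α)` is a `Z`-set (resp. a `Z_m`-set) in `B̄(g,α)` (uniform convergence
topology). -/
theorem statement4 {X Y E : Type*} [TopologicalSpace X] [TopologicalSpace.MetrizableSpace X]
    [TopologicalSpace Y] [TopologicalSpace.MetrizableSpace Y]
    [NormedAddCommGroup E] [NormedSpace ℝ E] [CompleteSpace E]
    (K : Set E) (hKcl : IsClosed K) (hKcv : Convex ℝ K)
    (f : X → Y) (hf : IsPerfectMap f) (hfsurj : Function.Surjective f)
    (𝒞 : Y → Set (X →ᵇ ↥K))
    (hdet : ∀ y : Y, ∀ g ∈ 𝒞 y, ∀ h : X →ᵇ ↥K,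
      (∀ x ∈ f ⁻¹' {y}, h x = g x) → h ∈ 𝒞 y)
    (y : Y) (hψ : IsClosed ((𝒞 y)ᶜ)) :
    ((∀ k : ℕ, Dense {u : C((Fin k → unitInterval) × ↥(f ⁻¹' {y}), ↥K) |
        ∀ z : Fin k → unitInterval, ∃ g' ∈ 𝒞 y, ∀ x : ↥(f ⁻¹' {y}), g' ↑x = u (z, x)}) →
      ∀ (α : X → ℝ), Continuous α → (∀ x, 0 < α x) → ∀ g : X →ᵇ ↥K,
        IsZSet (Subtype.val ⁻¹' (𝒞 y)ᶜ :
          Set ↥{h : X →ᵇ ↥K | ∀ x, dist (h x) (g x) ≤ α x})) ∧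
    (∀ m : ℕ, Dense {u : C((Fin m → unitInterval) × ↥(f ⁻¹' {y}), ↥K) |
        ∀ z : Fin m → unitInterval, ∃ g' ∈ 𝒞 y, ∀ x : ↥(f ⁻¹' {y}), g' ↑x = u (z, x)} →
      ∀ (α : X → ℝ), Continuous α → (∀ x, 0 < α x) → ∀ g : X →ᵇ ↥K,
        IsZmSet m (Subtype.val ⁻¹' (𝒞 y)ᶜ :
          Set ↥{h : X →ᵇ ↥K | ∀ x, dist (h x) (g x) ≤ α x})) :=
  statement4_general K hKcv f hf hfsurj 𝒞 hdet y hψ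
end

section
/- Let f : X → Y be a perfect 0-dimensional map between metrizable spaces with dim Y ≤ m, let Γ = {G_1, …, G_{m+2}} be a family of m + 2 pairwise disjoint closed subsets of X each of which is the closure of θ⁻¹(W) for some basic open set W of the Hilbert cube Q, where θ : X → Q is a fixed map such that f×θ : X → Y × Q is an embedding. For y ∈ Y let 𝒞_Γ(y) be the set of all g ∈ C*(X) such that every set g⁻¹(z) ∩ f⁻¹(y), z ∈ ℝ, meets at most m + 1 elements of Γ. Then for every y ∈ Y and every g ∈ 𝒞_Γ(y) there exist a neighborhood V of y in Y and δ > 0 such that every h ∈ C*(X) whose restriction to f⁻¹(V) is δ-close to g|f⁻¹(V) belongs to 𝒞_Γ(V) = ∩_{y' ∈ V} 𝒞_Γ(y'). -/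
open Set Topology Metric BoundedContinuousFunction

/-- (Lemma 3.2) Local stability of the classes `𝒞_Γ(y)`: if every set
`g⁻¹(z) ∩ f⁻¹(y)` meets at most `m + 1` members of `Γ`, then the same is true for all
functions sufficiently close to `g` over a neighborhood of `y`. -/
theorem statement7 {X Y : Type*} [TopologicalSpace X] [TopologicalSpace.MetrizableSpace X]
    [TopologicalSpace Y] [TopologicalSpace.MetrizableSpace Y]
    (m : ℕ) (f : X → Y) (hf : IsPerfectMap f)
    (hfdim : DimMapLE f 0) (hdimY : CovDimLE Y m)
    (θ : X → (ℕ → unitInterval)) (hθ : Continuous θ)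
    (hemb : IsEmbedding (fun x => (f x, θ x)))
    (G : Fin (m + 2) → Set X)
    (hGdisj : Pairwise (Function.onFun Disjoint G))
    (hGcl : ∀ j, IsClosed (G j))
    (hGbasic : ∀ j, ∃ W : Set (ℕ → unitInterval), IsOpen W ∧ G j = closure (θ ⁻¹' W))
    (y : Y) (g : X →ᵇ ℝ)
    (hg : ∀ z : ℝ, {j : Fin (m + 2) |
        ((⇑g) ⁻¹' {z} ∩ f ⁻¹' {y} ∩ G j).Nonempty}.ncard ≤ m + 1) :
    ∃ V : Set Y, IsOpen V ∧ y ∈ V ∧ ∃ δ : ℝ, 0 < δ ∧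
      ∀ h : X →ᵇ ℝ, (∀ x ∈ f ⁻¹' V, |h x - g x| ≤ δ) →
        ∀ y' ∈ V, ∀ z : ℝ, {j : Fin (m + 2) |
          ((⇑h) ⁻¹' {z} ∩ f ⁻¹' {y'} ∩ G j).Nonempty}.ncard ≤ m + 1 := by

  classical
  obtain ⟨hfc, hfcl, hfcpt⟩ := hf
  -- The auxiliary counting lemma
  have haux : ∀ (S : Set (Fin (m + 2))) (j : Fin (m + 2)), j ∉ S → S.ncard ≤ m + 1 := by
    intro S j hj
    have h1 : S ⊂ Set.univ := Set.ssubset_univ_iff.2 (fun h => hj (h ▸ Set.mem_univ j))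
    have h2 := Set.ncard_lt_ncard h1 Set.finite_univ
    rw [Set.ncard_univ] at h2
    simp only [Nat.card_eq_fintype_card, Fintype.card_fin] at h2
    omega
  set K : Fin (m + 2) → Set ℝ := fun j => g '' (f ⁻¹' {y} ∩ G j) with hKdef
  have hKcpt : ∀ j, IsCompact (K j) := fun j =>
    (((hfcpt y).inter_right (hGcl j)).image g.continuous)
  have hmiss : ∀ z : ℝ, ∃ j, z ∉ K j := by
    intro z
    by_contra hcon
    push_neg at hcon
    have huniv : {j : Fin (m + 2) |
        ((⇑g) ⁻¹' {z} ∩ f ⁻¹' {y} ∩ G j).Nonempty} = Set.univ := by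
      ext j
      simp only [Set.mem_setOf_eq, Set.mem_univ, iff_true]
      obtain ⟨x, hx, hgx⟩ := hcon j
      exact ⟨x, ⟨⟨hgx, hx.1⟩, hx.2⟩⟩
    have h2 := hg z
    rw [huniv, Set.ncard_univ] at h2
    simp only [Nat.card_eq_fintype_card, Fintype.card_fin] at h2
    omega
  by_cases hne : ∀ j, (K j).Nonempty
  · -- main case: all K j nonempty
    have hKcl : ∀ j, IsClosed (K j) := fun j => (hKcpt j).isClosed
    have hKsub : ∀ j, ∀ w ∈ K j, |w| ≤ ‖g‖ := by
      rintro j w ⟨x, hx, rfl⟩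
      simpa using g.norm_coe_le_norm x
    -- the max of the distances to the K j
    set Φ : ℝ → ℝ := Finset.univ.sup' (Finset.univ_nonempty (α := Fin (m + 2)))
        (fun j => (Metric.infDist · (K j))) with hΦdef
    have hΦapp : ∀ z : ℝ, Φ z = Finset.univ.sup' (Finset.univ_nonempty (α := Fin (m + 2)))
        (fun j => Metric.infDist z (K j)) := by
      intro z
      rw [hΦdef, Finset.sup'_apply]
    have hΦcont : Continuous Φ :=
      Continuous.finset_sup' _ (fun j _ => Metric.continuous_infDist_pt (K j))
    have hΦpos : ∀ z : ℝ, 0 < Φ z := by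
      intro z
      obtain ⟨j, hj⟩ := hmiss z
      have h1 : 0 < Metric.infDist z (K j) :=
        ((hKcl j).notMem_iff_infDist_pos (hne j)).1 hj
      rw [hΦapp]
      exact lt_of_lt_of_le h1 (Finset.le_sup' (fun j => Metric.infDist z (K j)) (Finset.mem_univ j))
    obtain ⟨z₀, hz₀mem, hz₀min⟩ :=
      (isCompact_Icc (a := -(‖g‖ + 1)) (b := ‖g‖ + 1)).exists_isMinOn
        ⟨0, by constructor <;> [linarith [norm_nonneg g]; linarith [norm_nonneg g]]⟩
        hΦcont.continuousOn
    set ε : ℝ := min (Φ z₀) 1 with hεdef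
    have hεpos : 0 < ε := lt_min (hΦpos z₀) one_pos
    have hkey : ∀ z : ℝ, ∃ j, ε ≤ Metric.infDist z (K j) := by
      intro z
      by_cases hz : z ∈ Set.Icc (-(‖g‖ + 1)) (‖g‖ + 1)
      · obtain ⟨j, _, hj⟩ := Finset.exists_mem_eq_sup'
          (Finset.univ_nonempty (α := Fin (m + 2)))
          (fun j => Metric.infDist z (K j))
        refine ⟨j, le_trans (min_le_left _ _) ?_⟩
        calc Φ z₀ ≤ Φ z := hz₀min hz
          _ = Metric.infDist z (K j) := by rw [hΦapp]; exact hj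
      · refine ⟨⟨0, by omega⟩, le_trans (min_le_right _ _) ?_⟩
        by_contra hlt
        push_neg at hlt
        obtain ⟨w, hw, hdw⟩ := (Metric.infDist_lt_iff (hne _)).1 hlt
        have h1 := hKsub _ w hw
        rw [Real.dist_eq] at hdw
        simp only [Set.mem_Icc, not_and_or, not_le] at hz
        rcases hz with hz | hz
        · have := abs_le.1 h1
          have := abs_lt.1 hdw
          linarith
        · have := abs_le.1 h1
          have := abs_lt.1 hdw
          linarith
    -- tube neighborhoods
    set U : Fin (m + 2) → Set X :=
      fun j => {x : X | Metric.infDist (g x) (K j) < ε / 4} with hUdef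
    have hUopen : ∀ j, IsOpen (U j) :=
      fun j => isOpen_lt ((Metric.continuous_infDist_pt (K j)).comp g.continuous)
        continuous_const
    have hfibU : ∀ j, f ⁻¹' {y} ∩ G j ⊆ U j := by
      intro j x hx
      have : g x ∈ K j := Set.mem_image_of_mem g hx
      simp only [hUdef, Set.mem_setOf_eq, Metric.infDist_zero_of_mem this]
      linarith
    set V : Fin (m + 2) → Set Y :=
      fun j => (f '' (U j ∪ (G j)ᶜ)ᶜ)ᶜ with hVdef
    have hVopen : ∀ j, IsOpen (V j) :=
      fun j => (hfcl _ (((hUopen j).union (hGcl j).isOpen_compl).isClosed_compl)).isOpen_compl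
    have hyV : ∀ j, y ∈ V j := by
      intro j
      rintro ⟨x, hx, hfx⟩
      rw [Set.mem_compl_iff, Set.mem_union, not_or] at hx
      exact hx.1 (hfibU j ⟨by simp [hfx], Set.not_notMem.1 hx.2⟩)
    have hVprop : ∀ j, ∀ x : X, f x ∈ V j → x ∈ U j ∪ (G j)ᶜ := by
      intro j x hx
      by_contra hcon
      exact hx ⟨x, hcon, rfl⟩
    refine ⟨⋂ j, V j, isOpen_iInter_of_finite hVopen, Set.mem_iInter.2 hyV,
      ε / 4, by linarith, ?_⟩
    intro h hh y' hy' z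
    obtain ⟨j, hj⟩ := hkey z
    apply haux _ j
    rintro ⟨x, ⟨⟨hxz, hxy⟩, hxG⟩⟩
    have hfx : f x = y' := hxy
    have hxV : f x ∈ V j := by
      rw [hfx]; exact Set.mem_iInter.1 hy' j
    have hxU : x ∈ U j := by
      rcases hVprop j x hxV with h1 | h1
      · exact h1
      · exact absurd hxG h1
    have h1 : Metric.infDist (g x) (K j) < ε / 4 := hxU
    have h2 : |h x - g x| ≤ ε / 4 := hh x (by rw [Set.mem_preimage, hfx]; exact hy')
    have h3 : h x = z := hxz
    have h4 : Metric.infDist z (K j) ≤ Metric.infDist (g x) (K j) + dist z (g x) :=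
      Metric.infDist_le_infDist_add_dist
    have h5 : dist z (g x) = |h x - g x| := by rw [Real.dist_eq, h3]
    rw [h5] at h4
    linarith [le_trans hj h4]
  · -- some K j is empty
    push_neg at hne
    obtain ⟨j0, hj0⟩ := hne
    refine ⟨(f '' G j0)ᶜ, (hfcl _ (hGcl j0)).isOpen_compl, ?_, 1, one_pos, ?_⟩
    · rintro ⟨x, hxG, hfx⟩
      have : g x ∈ K j0 := Set.mem_image_of_mem g ⟨by simp [hfx], hxG⟩
      rw [hj0] at this
      exact this
    · intro h _ y' hy' z
      apply haux _ j0
      rintro ⟨x, ⟨⟨_, hxy⟩, hxG⟩⟩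
      exact hy' ⟨x, hxG, hxy⟩
end

section
/- Let f : X → Y be a perfect 0-dimensional map between metrizable spaces with dim Y ≤ m, let Γ be a family of m + 2 pairwise disjoint closed subsets of X, and fix y ∈ Y. Let 𝒞_Γ(y) be the set of all g ∈ C*(X) such that every set g⁻¹(z) ∩ f⁻¹(y), z ∈ ℝ, meets at most m + 1 elements of Γ. Then the set of all functions g ∈ C(𝕀^m × f⁻¹(y)) such that g|({z} × f⁻¹(y)) ∈ 𝒞_Γ(y) for each z ∈ 𝕀^m is dense in C(𝕀^m × f⁻¹(y)) with respect to the uniform convergence topology. -/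
open Set Topology Metric BoundedContinuousFunction

open NNReal in
lemma partition_lemma {K : Type*} [MetricSpace K] [CompactSpace K]
    (hdim : CovDimLENat K 0) {ι : Type*} [Fintype ι] [Nonempty ι] (C : ι → Set K)
    (hCcl : ∀ j, IsClosed (C j))
    (hCdisj : ∀ j j', j ≠ j' → ∀ x, x ∈ C j → x ∈ C j' → False)
    {δ : ℝ} (hδ : 0 < δ) :
    ∃ (N : ℕ) (V : Fin N → Set K),
      (∀ i, IsOpen (V i)) ∧ (∀ x, ∃ i, x ∈ V i) ∧
      (∀ i i' x, x ∈ V i → x ∈ V i' → i = i') ∧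
      (∀ i x x', x ∈ V i → x' ∈ V i → dist x x' < δ) ∧
      (∀ i j j', (V i ∩ C j).Nonempty → (V i ∩ C j').Nonempty → j = j') := by
  classical
  -- choose radii
  have h1 : ∀ (x : K) (j : ι), ∃ ρ : ℝ, 0 < ρ ∧ (x ∉ C j → Disjoint (ball x ρ) (C j)) := by
    intro x j
    by_cases hx : x ∈ C j
    · exact ⟨1, one_pos, fun h => absurd hx h⟩
    · obtain ⟨ρ, hρ, hsub⟩ := Metric.isOpen_iff.mp (hCcl j).isOpen_compl x hx
      exact ⟨ρ, hρ, fun _ => Set.disjoint_left.mpr fun z hz => hsub hz⟩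
  choose ρ hρpos hρdisj using h1
  set r : K → ℝ := fun x => min (δ / 2) (Finset.univ.inf' Finset.univ_nonempty (ρ x)) with hr
  have hrpos : ∀ x, 0 < r x := fun x =>
    lt_min (by linarith) ((Finset.lt_inf'_iff _).mpr fun j _ => hρpos x j)
  have hrle : ∀ x, r x ≤ δ / 2 := fun x => min_le_left _ _
  have hrdisj : ∀ x j, x ∉ C j → Disjoint (ball x (r x)) (C j) := by
    intro x j hx
    refine Disjoint.mono_left (ball_subset_ball ?_) (hρdisj x j hx)
    exact le_trans (min_le_right _ _) (Finset.inf'_le _ (Finset.mem_univ j))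
  -- finite subcover by balls
  obtain ⟨t, ht⟩ := IsCompact.elim_finite_subcover isCompact_univ
    (fun x : K => ball x (r x)) (fun x => isOpen_ball)
    (fun x _ => mem_iUnion.mpr ⟨x, mem_ball_self (hrpos x)⟩)
  set 𝒰 : Set (Set K) := (fun x => ball x (r x)) '' ↑t with h𝒰
  have h𝒰fin : 𝒰.Finite := t.finite_toSet.image _
  have h𝒰open : ∀ U ∈ 𝒰, IsOpen U := by rintro U ⟨x, _, rfl⟩; exact isOpen_ball
  have h𝒰cov : ⋃₀ 𝒰 = univ := by
    apply eq_univ_of_univ_subset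
    rw [h𝒰, sUnion_image]
    exact ht
  obtain ⟨𝒱, hVopen, hVcov, hVref, hVpt⟩ := hdim 𝒰 h𝒰fin h𝒰open h𝒰cov
  -- finite subcover of 𝒱
  obtain ⟨s, hs⟩ := IsCompact.elim_finite_subcover isCompact_univ
    (fun V : ↥𝒱 => (V : Set K)) (fun V => hVopen V V.2)
    (by
      intro x _
      have : x ∈ ⋃₀ 𝒱 := hVcov ▸ mem_univ x
      obtain ⟨V, hV, hxV⟩ := this
      exact mem_iUnion.mpr ⟨⟨V, hV⟩, hxV⟩)
  refine ⟨s.card, fun i => ((s.equivFin.symm i : ↥𝒱) : Set K), ?_, ?_, ?_, ?_, ?_⟩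
  · intro i
    exact hVopen _ (s.equivFin.symm i : ↥𝒱).2
  · intro x
    obtain ⟨V, hVmem, hxV⟩ := mem_iUnion₂.mp (hs (mem_univ x))
    exact ⟨s.equivFin ⟨V, hVmem⟩, by simpa using hxV⟩
  · intro i i' x hxi hxi'
    have hsub : {V ∈ 𝒱 | x ∈ V}.ncard ≤ 1 := (hVpt x).2
    have h1 : (((s.equivFin.symm i : ↥𝒱) : Set K)) ∈ {V ∈ 𝒱 | x ∈ V} :=
      ⟨(s.equivFin.symm i : ↥𝒱).2, hxi⟩
    have h2 : (((s.equivFin.symm i' : ↥𝒱) : Set K)) ∈ {V ∈ 𝒱 | x ∈ V} :=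
      ⟨(s.equivFin.symm i' : ↥𝒱).2, hxi'⟩
    have heq : (((s.equivFin.symm i : ↥𝒱) : Set K)) = (((s.equivFin.symm i' : ↥𝒱) : Set K)) :=
      (Set.ncard_le_one (hVpt x).1).mp hsub _ h1 _ h2
    have : s.equivFin.symm i = s.equivFin.symm i' :=
      Subtype.ext (Subtype.ext heq)
    simpa using congrArg s.equivFin this
  · intro i x x' hx hx'
    obtain ⟨U, hU, hVU⟩ := hVref _ (s.equivFin.symm i : ↥𝒱).2
    obtain ⟨x₀, _, rfl⟩ := hU
    calc dist x x' ≤ dist x x₀ + dist x₀ x' := dist_triangle _ _ _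
      _ < r x₀ + r x₀ := by
          have h1 := mem_ball.mp (hVU hx)
          have h2 := mem_ball.mp (hVU hx')
          rw [dist_comm x' x₀] at h2
          exact add_lt_add h1 h2
      _ ≤ δ / 2 + δ / 2 := add_le_add (hrle x₀) (hrle x₀)
      _ = δ := by ring
  · intro i j j' ⟨a, haV, haC⟩ ⟨a', haV', haC'⟩
    by_contra hjj'
    obtain ⟨U, hU, hVU⟩ := hVref _ (s.equivFin.symm i : ↥𝒱).2
    obtain ⟨x₀, _, rfl⟩ := hU
    by_cases hx₀ : x₀ ∈ C j
    · have hx₀' : x₀ ∉ C j' := fun h => hCdisj j j' hjj' x₀ hx₀ h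
      exact Set.disjoint_left.mp (hrdisj x₀ j' hx₀') (hVU haV') haC'
    · exact Set.disjoint_left.mp (hrdisj x₀ j hx₀) (hVU haV) haC

open NNReal in
/-- Density of Lipschitz functions in C(D, ℝ) for compact metric D. -/
lemma exists_lipschitz_near {D : Type*} [MetricSpace D] [CompactSpace D]
    (u : C(D, ℝ)) {ε : ℝ} (hε : 0 < ε) :
    ∃ (v : C(D, ℝ)) (L : ℝ≥0), LipschitzWith L v ∧ ∀ z, dist (v z) (u z) < ε := by
  classical
  set A : Subalgebra ℝ C(D, ℝ) :=
    { carrier := {v | ∃ L : ℝ≥0, LipschitzWith L v}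
      mul_mem' := by
        rintro f g ⟨Lf, hf⟩ ⟨Lg, hg⟩
        refine ⟨‖f‖₊ * Lg + ‖g‖₊ * Lf, LipschitzWith.of_dist_le_mul fun x y => ?_⟩
        have h1 : dist (f x * g x) (f y * g y) ≤
            |f x| * dist (g x) (g y) + |g y| * dist (f x) (f y) := by
          have : f x * g x - f y * g y = f x * (g x - g y) + g y * (f x - f y) := by ring
          simp only [Real.dist_eq, this]
          calc |f x * (g x - g y) + g y * (f x - f y)|
              ≤ |f x * (g x - g y)| + |g y * (f x - f y)| := abs_add_le _ _
            _ = |f x| * |g x - g y| + |g y| * |f x - f y| := by rw [abs_mul, abs_mul]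
        have hfb : |f x| ≤ ‖f‖ := (ContinuousMap.norm_coe_le_norm f x)
        have hgb : |g y| ≤ ‖g‖ := (ContinuousMap.norm_coe_le_norm g y)
        have h2 : dist (g x) (g y) ≤ Lg * dist x y := hg.dist_le_mul x y
        have h3 : dist (f x) (f y) ≤ Lf * dist x y := hf.dist_le_mul x y
        have hnn : (0:ℝ) ≤ dist (g x) (g y) := dist_nonneg
        have hnn' : (0:ℝ) ≤ dist (f x) (f y) := dist_nonneg
        have habs : (0:ℝ) ≤ |f x| := abs_nonneg _
        have habs' : (0:ℝ) ≤ |g y| := abs_nonneg _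
        have hf0 : (0:ℝ) ≤ ‖f‖ := norm_nonneg _
        have hg0 : (0:ℝ) ≤ ‖g‖ := norm_nonneg _
        calc dist (f x * g x) (f y * g y)
            ≤ |f x| * dist (g x) (g y) + |g y| * dist (f x) (f y) := h1
          _ ≤ ‖f‖ * (Lg * dist x y) + ‖g‖ * (Lf * dist x y) := by
              gcongr
          _ = (‖f‖ * Lg + ‖g‖ * Lf) * dist x y := by ring
          _ = ((‖f‖₊ * Lg + ‖g‖₊ * Lf : ℝ≥0) : ℝ) * dist x y := by
              push_cast [coe_nnnorm]; ring_nf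
      one_mem' := ⟨0, by simpa using LipschitzWith.const (1 : ℝ)⟩
      add_mem' := by
        rintro f g ⟨Lf, hf⟩ ⟨Lg, hg⟩
        exact ⟨Lf + Lg, hf.add hg⟩
      zero_mem' := ⟨0, by simpa using LipschitzWith.const (0 : ℝ)⟩
      algebraMap_mem' := fun c => ⟨0, by
        have : ⇑(algebraMap ℝ C(D, ℝ) c) = fun _ : D => c := by
          ext z; simp [Algebra.algebraMap_eq_smul_one]
        rw [this]
        exact LipschitzWith.const c⟩ }
  have hsep : A.SeparatesPoints := by
    intro x y hxy
    have hlip : LipschitzWith 1 (fun z : D => dist z x) :=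
      LipschitzWith.of_dist_le_mul fun a b => by
        simpa [Real.dist_eq] using abs_dist_sub_le a b x
    refine ⟨fun z => dist z x,
      ⟨⟨fun z => dist z x, hlip.continuous⟩, ⟨1, hlip⟩, rfl⟩, ?_⟩
    simp only [dist_self]
    intro h
    exact hxy (dist_eq_zero.mp h.symm).symm
  obtain ⟨⟨v, ⟨L, hL⟩⟩, hv⟩ :=
    ContinuousMap.exists_mem_subalgebra_near_continuousMap_of_separatesPoints A hsep u ε hε
  refine ⟨v, L, hL, fun z => ?_⟩
  have := ContinuousMap.norm_coe_le_norm (v - u) z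
  have h2 : |v z - u z| ≤ ‖v - u‖ := by simpa using this
  calc dist (v z) (u z) = |v z - u z| := Real.dist_eq _ _
    _ ≤ ‖v - u‖ := h2
    _ < ε := hv

open NNReal ENNReal

/-- (Lemma 3.3) The maps on `𝕀^m × f⁻¹(y)` all of whose slices belong to
`𝒞_Γ(y)` (i.e. for each `z ∈ 𝕀^m` and `t ∈ ℝ` the slice fiber meets at most `m + 1`
members of `Γ`) are dense in `C(𝕀^m × f⁻¹(y))` (uniform convergence topology). -/
theorem statement8 {X Y : Type*} [TopologicalSpace X] [TopologicalSpace.MetrizableSpace X]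
    [TopologicalSpace Y] [TopologicalSpace.MetrizableSpace Y]
    (m : ℕ) (f : X → Y) (hf : IsPerfectMap f)
    (hfdim : DimMapLE f 0) (hdimY : CovDimLE Y m)
    (G : Fin (m + 2) → Set X)
    (hGdisj : Pairwise (Function.onFun Disjoint G))
    (hGcl : ∀ j, IsClosed (G j))
    (y : Y) :
    Dense {g : C((Fin m → unitInterval) × ↥(f ⁻¹' {y}), ℝ) |
      ∀ z : Fin m → unitInterval, ∀ t : ℝ,
        {j : Fin (m + 2) |
          ∃ x : ↥(f ⁻¹' {y}), g (z, x) = t ∧ (x : X) ∈ G j}.ncard ≤ m + 1} := by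
  classical
  have hK : IsCompact (f ⁻¹' {y}) := hf.2.2 y
  haveI : CompactSpace (↥(f ⁻¹' {y})) := isCompact_iff_compactSpace.mp hK
  letI : MetricSpace (↥(f ⁻¹' {y})) := TopologicalSpace.metrizableSpaceMetric _
  rw [Metric.dense_iff]
  intro g r hr
  rcases isEmpty_or_nonempty (↥(f ⁻¹' {y})) with hemp | hne
  · refine ⟨g, mem_ball_self hr, ?_⟩
    intro z t
    have hempty : {j : Fin (m + 2) |
        ∃ x : ↥(f ⁻¹' {y}), g (z, x) = t ∧ (x : X) ∈ G j} = ∅ :=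
      eq_empty_of_forall_notMem fun j hj => hemp.false hj.choose
    simp [hempty]
  -- nonempty fiber case
  obtain hdim0 : CovDimLENat (↥(f ⁻¹' {y})) 0 := by
    rcases hfdim y with h | ⟨k, hk, hdim⟩
    · exact (h.false hne.some).elim
    · have hk0 : k = 0 := by exact_mod_cast Nat.le_zero.mp (by exact_mod_cast hk)
      rwa [hk0] at hdim
  -- closed disjoint traces on the fiber
  set C : Fin (m + 2) → Set (↥(f ⁻¹' {y})) := fun j => {x | (x : X) ∈ G j} with hC
  have hCcl : ∀ j, IsClosed (C j) := fun j => (hGcl j).preimage continuous_subtype_val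
  have hCdisj : ∀ j j', j ≠ j' → ∀ x, x ∈ C j → x ∈ C j' → False := fun j j' hjj' x hx hx' =>
    Set.disjoint_left.mp (hGdisj hjj') hx hx'
  -- uniform continuity
  have hUC := CompactSpace.uniformContinuous_of_continuous
    (α := (Fin m → unitInterval) × ↥(f ⁻¹' {y})) (β := ℝ) g.continuous
  rw [Metric.uniformContinuous_iff] at hUC
  obtain ⟨δ, hδpos, hδ⟩ := hUC (r / 4) (by linarith)
  -- partition of the fiber
  obtain ⟨N, V, hVo, hVcov, hVuniq, hVdiam, hVlab⟩ :=
    partition_lemma hdim0 C hCcl hCdisj hδpos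
  -- index of the piece containing a point
  have hVcov' : ∀ x, ∃ i, x ∈ V i := hVcov
  let idx : ↥(f ⁻¹' {y}) → Fin N := fun x => (hVcov' x).choose
  have hidx : ∀ x, x ∈ V (idx x) := fun x => (hVcov' x).choose_spec
  -- representatives
  let rep : Fin N → ↥(f ⁻¹' {y}) := fun i =>
    if h : (V i).Nonempty then h.choose else hne.some
  have hrep : ∀ i, (V i).Nonempty → rep i ∈ V i := by
    intro i h
    simp only [rep, dif_pos h]
    exact h.choose_spec
  -- slice functions and their Lipschitz approximations
  let u : Fin N → C(Fin m → unitInterval, ℝ) := fun i =>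
    ⟨fun z => g (z, rep i), g.continuous.comp (continuous_id.prodMk continuous_const)⟩
  have haux : ∀ i, ∃ (v : C(Fin m → unitInterval, ℝ)) (L : ℝ≥0),
      LipschitzWith L v ∧ ∀ z, dist (v z) (u i z) < r / 4 :=
    fun i => exists_lipschitz_near (u i) (by linarith)
  choose uu L hL hLnear using haux
  set M : ℝ≥0 := Finset.univ.sup L with hM
  -- difference maps
  set W : (Fin (m + 2) → Fin N) → (Fin m → unitInterval) → (Fin (m + 1) → ℝ) :=
    fun σ z k => uu (σ k.succ) z - uu (σ 0) z with hW
  have hWlip : ∀ σ, LipschitzWith (M + M) (W σ) := by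
    intro σ
    apply LipschitzWith.of_dist_le_mul
    intro a b
    rw [dist_pi_le_iff (by positivity)]
    intro k
    have h1 : dist (uu (σ k.succ) a) (uu (σ k.succ) b) ≤ L (σ k.succ) * dist a b :=
      (hL _).dist_le_mul a b
    have h2 : dist (uu (σ 0) a) (uu (σ 0) b) ≤ L (σ 0) * dist a b := (hL _).dist_le_mul a b
    have hm1 : (L (σ k.succ) : ℝ) ≤ (M : ℝ) :=
      NNReal.coe_le_coe.mpr (Finset.le_sup (Finset.mem_univ _))
    have hm2 : (L (σ 0) : ℝ) ≤ (M : ℝ) :=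
      NNReal.coe_le_coe.mpr (Finset.le_sup (Finset.mem_univ _))
    calc dist (W σ a k) (W σ b k)
        ≤ dist (uu (σ k.succ) a) (uu (σ k.succ) b) + dist (uu (σ 0) a) (uu (σ 0) b) :=
          dist_sub_sub_le _ _ _ _
      _ ≤ L (σ k.succ) * dist a b + L (σ 0) * dist a b := add_le_add h1 h2
      _ ≤ M * dist a b + M * dist a b := by gcongr
      _ = ((M + M : ℝ≥0) : ℝ) * dist a b := by push_cast; ring
  -- Hausdorff dimension bound
  have hiso : Isometry (fun (z : Fin m → unitInterval) (k : Fin m) => (z k : ℝ)) := by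
    intro a b
    rw [edist_pi_def, edist_pi_def]
    rfl
  have hdimD : dimH (univ : Set (Fin m → unitInterval)) ≤ (m : ℝ≥0∞) := by
    rw [← hiso.dimH_image univ]
    exact (dimH_mono (subset_univ _)).trans_eq (Real.dimH_univ_pi_fin m)
  have hBdim : dimH (⋃ σ : Fin (m + 2) → Fin N, range (W σ)) ≤ (m : ℝ≥0∞) := by
    rw [dimH_iUnion]
    refine iSup_le fun σ => ?_
    rw [← image_univ]
    exact ((hWlip σ).dimH_image_le univ).trans hdimD
  have hdense : Dense (⋃ σ : Fin (m + 2) → Fin N, range (W σ))ᶜ := by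
    apply dense_compl_of_dimH_lt_finrank
    refine lt_of_le_of_lt hBdim ?_
    rw [Module.finrank_fin_fun]
    exact_mod_cast Nat.lt_succ_self m
  obtain ⟨c, hcB, hcball⟩ := hdense.exists_mem_open isOpen_ball
    ⟨0, mem_ball_self (by linarith : (0:ℝ) < r / 8)⟩
  have hc : ∀ k, |c k| < r / 8 := by
    intro k
    have h1 : dist (c k) ((0 : Fin (m + 1) → ℝ) k) ≤ dist c 0 := dist_le_pi_dist c 0 k
    have h2 : dist c 0 < r / 8 := mem_ball.mp hcball
    have : |c k - 0| < r / 8 := lt_of_le_of_lt (by simpa [Real.dist_eq] using h1) h2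
    simpa using this
  -- shifts
  set b : Fin (m + 2) → ℝ := fun j => Fin.cases 0 (fun k => -(c k)) j with hb
  have hbb : ∀ j, |b j| ≤ r / 8 := by
    intro j
    induction j using Fin.cases with
    | zero => simp [b]; linarith
    | succ k => simp only [b, Fin.cases_succ, abs_neg]; exact le_of_lt (hc k)
  let sft : Fin N → ℝ := fun i =>
    if h : ∃ j, (V i ∩ C j).Nonempty then b h.choose else 0
  have hsft_bound : ∀ i, |sft i| ≤ r / 8 := by
    intro i
    by_cases h : ∃ j, (V i ∩ C j).Nonempty
    · simp only [sft, dif_pos h]; exact hbb _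
    · simp only [sft, dif_neg h, abs_zero]; linarith
  have hsft_eq : ∀ i j, (V i ∩ C j).Nonempty → sft i = b j := by
    intro i j hij
    have h : ∃ j', (V i ∩ C j').Nonempty := ⟨j, hij⟩
    simp only [sft, dif_pos h]
    congr 1
    exact hVlab i _ _ h.choose_spec hij
  -- the approximating function
  let F : Fin N → C((Fin m → unitInterval) × ↥(f ⁻¹' {y}), ℝ) := fun i =>
    ⟨fun p => uu i p.1 + sft i, ((uu i).continuous.comp continuous_fst).add continuous_const⟩
  have hFcont : Continuous fun p : (Fin m → unitInterval) × ↥(f ⁻¹' {y}) =>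
      F (idx p.2) p := by
    rw [continuous_iff_continuousAt]
    intro p
    have hU : (univ ×ˢ V (idx p.2)) ∈ 𝓝 p :=
      prod_mem_nhds Filter.univ_mem ((hVo _).mem_nhds (hidx p.2))
    refine ContinuousAt.congr (F (idx p.2)).continuous.continuousAt ?_
    filter_upwards [hU] with q hq
    have : idx q.2 = idx p.2 := hVuniq _ _ q.2 (hidx q.2) hq.2
    rw [this]
  set gg : C((Fin m → unitInterval) × ↥(f ⁻¹' {y}), ℝ) := ⟨_, hFcont⟩ with hgg
  refine ⟨gg, ?_, ?_⟩
  · rw [mem_ball, ContinuousMap.dist_lt_iff hr]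
    rintro ⟨z, x⟩
    have hxV : x ∈ V (idx x) := hidx x
    have hrepV : rep (idx x) ∈ V (idx x) := hrep _ ⟨x, hxV⟩
    have hd1 : dist (gg (z, x)) (uu (idx x) z) = |sft (idx x)| := by
      have : gg (z, x) = uu (idx x) z + sft (idx x) := rfl
      rw [this, Real.dist_eq]
      simp
    have hd2 : dist (uu (idx x) z) (u (idx x) z) < r / 4 := hLnear (idx x) z
    have hd3 : dist (u (idx x) z) (g (z, x)) < r / 4 := by
      have hdd : dist ((z, rep (idx x)) : (Fin m → unitInterval) × ↥(f ⁻¹' {y})) (z, x) < δ := by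
        rw [Prod.dist_eq]
        refine max_lt (by simpa [dist_self] using hδpos) ?_
        exact hVdiam _ _ _ hrepV hxV
      have : dist (g (z, rep (idx x))) (g (z, x)) < r / 4 := hδ hdd
      exact this
    calc dist (gg (z, x)) (g (z, x))
        ≤ dist (gg (z, x)) (uu (idx x) z) + dist (uu (idx x) z) (u (idx x) z)
            + dist (u (idx x) z) (g (z, x)) := dist_triangle4 _ _ _ _
      _ < r / 8 + r / 4 + r / 4 := by
          rw [hd1]
          linarith [hsft_bound (idx x)]
      _ < r := by linarith
  · intro z t
    by_contra hcard
    push_neg at hcard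
    have hall : ∀ j : Fin (m + 2), ∃ x : ↥(f ⁻¹' {y}), gg (z, x) = t ∧ (x : X) ∈ G j := by
      intro j
      by_contra hj
      have hsub : {j' : Fin (m + 2) | ∃ x : ↥(f ⁻¹' {y}), gg (z, x) = t ∧ (x : X) ∈ G j'} ⊆
          (univ : Set (Fin (m + 2))) \ {j} := by
        intro j' hj'
        refine ⟨mem_univ _, ?_⟩
        simp only [mem_singleton_iff]
        rintro rfl
        exact hj hj'
      have h1 := Set.ncard_le_ncard hsub (toFinite _)
      have h2 : ((univ : Set (Fin (m + 2))) \ {j}).ncard = m + 1 := by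
        rw [Set.ncard_diff_singleton_of_mem (mem_univ j), Set.ncard_univ,
          Nat.card_eq_fintype_card, Fintype.card_fin]
        omega
      omega
    choose xw hxw1 hxw2 using hall
    set σ : Fin (m + 2) → Fin N := fun j => idx (xw j) with hσ
    have hmem : ∀ j, (V (σ j) ∩ C j).Nonempty := fun j => ⟨xw j, hidx (xw j), hxw2 j⟩
    have hval : ∀ j, uu (σ j) z + b j = t := by
      intro j
      have h0 : uu (σ j) z + sft (σ j) = t := hxw1 j
      rwa [hsft_eq (σ j) j (hmem j)] at h0
    refine hcB (mem_iUnion.mpr ⟨σ, ⟨z, ?_⟩⟩)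
    funext k
    have h0 := hval 0
    have hk := hval k.succ
    have hb0 : b 0 = 0 := rfl
    have hbk : b k.succ = -(c k) := by simp only [hb, Fin.cases_succ]
    show uu (σ k.succ) z - uu (σ 0) z = c k
    rw [hb0] at h0
    rw [hbk] at hk
    linarith
end

section
/- Let f : X → Y be a perfect n-dimensional surjective map between metrizable spaces, 0 ≤ k ≤ n, and for ε > 0 and y ∈ Y let 𝒞_ε(y) be the set of all g ∈ C*(X, ℝ^k) such that every set f⁻¹(y) ∩ g⁻¹(z), z ∈ ℝ^k, can be covered by a finite family γ of open subsets of X, each of diameter ≤ ε, such that every point of X is contained in at most n − k + 1 elements of γ. Then for every ε > 0, y ∈ Y and g ∈ 𝒞_ε(y) there exist a neighborhood V of y in Y and δ > 0 such that every h ∈ C*(X, ℝ^k) whose restriction to f⁻¹(V) is δ-close to g|f⁻¹(V) belongs to 𝒞_ε(V) = ∩_{y' ∈ V} 𝒞_ε(y'). -/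
open Set Topology Metric BoundedContinuousFunction

/-- (Lemma 4.2) Local stability of the classes `𝒞_ε(y)`: membership of
`g` in `𝒞_ε(y)` (each set `f⁻¹(y) ∩ g⁻¹(z)` admits a finite open cover of mesh `≤ ε` and
order `≤ n - k + 1`) persists for maps close to `g` over a neighborhood of `y`. -/
theorem statement10 {X Y : Type*} [MetricSpace X] [TopologicalSpace Y]
    [TopologicalSpace.MetrizableSpace Y]
    (n k : ℕ) (hk : k ≤ n) (f : X → Y) (hf : IsPerfectMap f)
    (hfsurj : Function.Surjective f) (hfdim : DimMapLE f n)
    (ε : ℝ) (hε : 0 < ε) (y : Y) (g : X →ᵇ EuclideanSpace ℝ (Fin k))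
    (hg : ∀ z : EuclideanSpace ℝ (Fin k), ∃ γ : Finset (Set X),
      (∀ U ∈ γ, IsOpen U ∧ Metric.diam U ≤ ε) ∧
      f ⁻¹' {y} ∩ (⇑g) ⁻¹' {z} ⊆ ⋃₀ ↑γ ∧
      ∀ x : X, {U ∈ (↑γ : Set (Set X)) | x ∈ U}.ncard ≤ n - k + 1) :
    ∃ V : Set Y, IsOpen V ∧ y ∈ V ∧ ∃ δ : ℝ, 0 < δ ∧
      ∀ h : X →ᵇ EuclideanSpace ℝ (Fin k),
        (∀ x ∈ f ⁻¹' V, dist (h x) (g x) ≤ δ) →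
        ∀ y' ∈ V, ∀ z : EuclideanSpace ℝ (Fin k), ∃ γ : Finset (Set X),
          (∀ U ∈ γ, IsOpen U ∧ Metric.diam U ≤ ε) ∧
          f ⁻¹' {y'} ∩ (⇑h) ⁻¹' {z} ⊆ ⋃₀ ↑γ ∧
          ∀ x : X, {U ∈ (↑γ : Set (Set X)) | x ∈ U}.ncard ≤ n - k + 1 := by
  
  classical
  obtain ⟨hfc, hfcl, hfib⟩ := hf
  set F := f ⁻¹' {y} with hF
  have hFc : IsCompact F := hfib y
  have key : ∀ z : EuclideanSpace ℝ (Fin k), ∃ (γ : Finset (Set X)) (r : ℝ), 0 < r ∧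
      (∀ U ∈ γ, IsOpen U ∧ Metric.diam U ≤ ε) ∧
      (∀ x : X, {U ∈ (↑γ : Set (Set X)) | x ∈ U}.ncard ≤ n - k + 1) ∧
      ∀ x ∈ F, dist (g x) z ≤ 3 * r → x ∈ ⋃₀ (↑γ : Set (Set X)) := by
    intro z
    obtain ⟨γ, hγ1, hγ2, hγ3⟩ := hg z
    have hUopen : IsOpen (⋃₀ (↑γ : Set (Set X))) :=
      isOpen_sUnion fun U hU => (hγ1 U hU).1
    set C : Set (EuclideanSpace ℝ (Fin k)) := g '' (F \ ⋃₀ (↑γ : Set (Set X))) with hC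
    have hCc : IsCompact C := (hFc.diff hUopen).image g.continuous
    have hzC : z ∉ C := by
      rintro ⟨x, ⟨hxF, hxU⟩, hxz⟩
      exact hxU (hγ2 ⟨hxF, hxz⟩)
    rcases C.eq_empty_or_nonempty with hCe | hCne
    · refine ⟨γ, 1, one_pos, hγ1, hγ3, fun x hx _ => ?_⟩
      by_contra hxU
      have : g x ∈ C := Set.mem_image_of_mem g ⟨hx, hxU⟩
      rw [hCe] at this
      exact this
    · have hd : 0 < Metric.infDist z C := by
        rw [← hCc.isClosed.notMem_iff_infDist_pos hCne]
        exact hzC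
      refine ⟨γ, Metric.infDist z C / 4, by positivity, hγ1, hγ3, fun x hx hdist => ?_⟩
      by_contra hxU
      have h1 : Metric.infDist z C ≤ dist z (g x) :=
        Metric.infDist_le_dist_of_mem (Set.mem_image_of_mem g ⟨hx, hxU⟩)
      rw [dist_comm] at h1
      nlinarith
  choose γ r hr hγopen hγord hγcov using key
  have hKc : IsCompact (g '' F) := hFc.image g.continuous
  obtain ⟨I, hIcov⟩ := hKc.elim_nhds_subcover (fun z => Metric.ball z (r z))
    (fun z _ => Metric.ball_mem_nhds z (hr z))
  obtain ⟨x₀, hx₀⟩ := hfsurj y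
  have hKne : (g '' F).Nonempty :=
    ⟨g x₀, Set.mem_image_of_mem g (by simp [hF, hx₀])⟩
  have hIne : I.Nonempty := by
    rcases Finset.eq_empty_or_nonempty I with hIe | h
    · exfalso
      obtain ⟨w, hw⟩ := hKne
      have := hIcov.2 hw
      simp [hIe] at this
    · exact h
  set δ := I.inf' hIne r with hδ
  have hδpos : 0 < δ := by
    rw [hδ, Finset.lt_inf'_iff]
    exact fun z _ => hr z
  have hδle : ∀ z ∈ I, δ ≤ r z := fun z hz => Finset.inf'_le r hz
  set W : Set X :=
    (⋂ z ∈ I, (⋃₀ (↑(γ z) : Set (Set X)) ∪ {x | 3 * r z < dist (g x) z})) ∩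
      (g ⁻¹' ⋃ z ∈ I, Metric.ball z (r z)) with hW
  have hWopen : IsOpen W := by
    apply IsOpen.inter
    · exact isOpen_biInter_finset fun z _ =>
        (isOpen_sUnion fun U hU => (hγopen z U hU).1).union
          (isOpen_lt continuous_const (g.continuous.dist continuous_const))
    · exact (isOpen_biUnion fun z _ => Metric.isOpen_ball).preimage g.continuous
  have hFW : F ⊆ W := by
    intro x hx
    refine ⟨Set.mem_iInter₂.2 fun z hz => ?_, hIcov.2 (Set.mem_image_of_mem g hx)⟩
    by_cases hd : dist (g x) z ≤ 3 * r z
    · exact Or.inl (hγcov z x hx hd)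
    · exact Or.inr (lt_of_not_ge hd)
  have hVopen : IsOpen (f '' Wᶜ)ᶜ := (hfcl _ hWopen.isClosed_compl).isOpen_compl
  have hyV : y ∈ (f '' Wᶜ)ᶜ := by
    rintro ⟨x, hxW, hxy⟩
    exact hxW (hFW (by simp [hF, hxy]))
  have hVW : f ⁻¹' (f '' Wᶜ)ᶜ ⊆ W := by
    intro x hx
    by_contra hxW
    exact hx ⟨x, hxW, rfl⟩
  refine ⟨(f '' Wᶜ)ᶜ, hVopen, hyV, δ, hδpos, ?_⟩
  intro h hclose y' hy' z
  rcases (f ⁻¹' {y'} ∩ (⇑h) ⁻¹' {z}).eq_empty_or_nonempty with he | ⟨x0, hx0f, hx0h⟩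
  · refine ⟨∅, by simp, by rw [he]; simp, fun x => ?_⟩
    simp
  · have hx0V : x0 ∈ f ⁻¹' (f '' Wᶜ)ᶜ := by
      have : f x0 = y' := hx0f
      simpa [Set.mem_preimage, this] using hy'
    have hx0W : x0 ∈ W := hVW hx0V
    obtain ⟨i, hiI, hgi⟩ := Set.mem_iUnion₂.1 hx0W.2
    have hzx0 : h x0 = z := hx0h
    have hzi : dist z i ≤ 2 * r i := by
      have h1 : dist (h x0) (g x0) ≤ δ := hclose x0 hx0V
      have h2 : dist (g x0) i < r i := hgi
      have h3 : dist z i ≤ dist z (g x0) + dist (g x0) i := dist_triangle _ _ _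
      have h4 : dist z (g x0) ≤ δ := by rw [← hzx0]; exact h1
      have h5 : δ ≤ r i := hδle i hiI
      linarith
    refine ⟨γ i, hγopen i, ?_, hγord i⟩
    rintro x ⟨hxf, hxh⟩
    have hfx : f x = y' := hxf
    have hhx : h x = z := hxh
    have hxV : x ∈ f ⁻¹' (f '' Wᶜ)ᶜ := by simpa [Set.mem_preimage, hfx] using hy'
    have hxW : x ∈ W := hVW hxV
    have hgxi : dist (g x) i ≤ 3 * r i := by
      have h1 : dist (g x) (h x) ≤ δ := by rw [dist_comm]; exact hclose x hxV
      have h2 : dist (g x) i ≤ dist (g x) (h x) + dist (h x) i := dist_triangle _ _ _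
      have h3 : dist (h x) i ≤ 2 * r i := by rw [hhx]; exact hzi
      have h5 : δ ≤ r i := hδle i hiI
      linarith
    rcases Set.mem_iInter₂.1 hxW.1 i hiI with hU | hlt
    · exact hU
    · exact absurd hgxi (not_le.2 hlt)
end

section
/- Let f : X → Y be a perfect 0-dimensional surjective map between metrizable spaces and let p ≥ 1 and l ≥ 1 be integers. Then the set of all maps g ∈ C*(X, ℝ^p) such that f×g : X → Y × ℝ^p is at most l-to-1 is a G_δ-subset of C*(X, ℝ^p) with respect to the source limitation topology. -/
open Set Topology Metric BoundedContinuousFunction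

lemma exists_cont_minorant {X : Type*} [MetricSpace X] (φ : X → ℝ)
    (hpos : ∀ x, 0 < φ x) (hcl : ∀ c : ℝ, IsClosed {x | φ x ≤ c}) :
    ∃ α : X → ℝ, Continuous α ∧ (∀ x, 0 < α x) ∧ ∀ x, α x ≤ φ x := by
  rcases isEmpty_or_nonempty X with hX | hX
  · exact ⟨fun _ => 1, continuous_const, fun x => (hX.false x).elim,
      fun x => (hX.false x).elim⟩
  have hb : ∀ x : X, BddBelow (Set.range fun y => φ y / 2 + dist x y) := by
    intro x
    refine ⟨0, ?_⟩
    rintro r ⟨y, rfl⟩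
    have := hpos y
    have := dist_nonneg (x := x) (y := y)
    dsimp only
    linarith
  set α : X → ℝ := fun x => ⨅ y, (φ y / 2 + dist x y) with hα
  have hle : ∀ x y : X, α x ≤ φ y / 2 + dist x y := fun x y => ciInf_le (hb x) y
  have hlip : ∀ x x' : X, α x ≤ α x' + dist x x' := by
    intro x x'
    have h1 : ∀ y, α x - dist x x' ≤ φ y / 2 + dist x' y := by
      intro y
      have h2 := hle x y
      have h3 : dist x y ≤ dist x x' + dist x' y := dist_triangle _ _ _
      linarith
    have h4 : α x - dist x x' ≤ α x' := le_ciInf h1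
    linarith
  have hcont : Continuous α := by
    have : LipschitzWith 1 α := LipschitzWith.of_dist_le_mul fun x x' => by
      rw [Real.dist_eq, NNReal.coe_one, one_mul, abs_sub_le_iff]
      constructor
      · linarith [hlip x x']
      · have h := hlip x' x
        rw [dist_comm] at h
        linarith
    exact this.continuous
  refine ⟨α, hcont, ?_, ?_⟩
  · intro x
    have hx : x ∉ {z | φ z ≤ φ x / 2} := by
      simp only [mem_setOf_eq, not_le]
      linarith [hpos x]
    obtain ⟨r, hr, hball⟩ := Metric.isOpen_iff.1 (hcl (φ x / 2)).isOpen_compl x hx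
    have hlb : ∀ y : X, min (φ x / 4) r ≤ φ y / 2 + dist x y := by
      intro y
      rcases lt_or_ge (dist x y) r with h | h
      · have hy : y ∈ Metric.ball x r := by rwa [mem_ball, dist_comm]
        have hy2 : φ x / 2 < φ y := by
          have := hball hy
          simpa [not_le] using this
        have := dist_nonneg (x := x) (y := y)
        have := min_le_left (φ x / 4) r
        linarith
      · have := min_le_right (φ x / 4) r
        linarith [hpos y]
    have := le_ciInf hlb
    have hmin : 0 < min (φ x / 4) r := lt_min (by linarith [hpos x]) hr
    calc (0:ℝ) < min (φ x / 4) r := hmin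
      _ ≤ α x := this
  · intro x
    have := hle x x
    simp only [dist_self, add_zero] at this
    linarith [hpos x]


/-- For a perfect 0-dimensional surjective map `f : X → Y` and integers
`p, l ≥ 1`, the set of all bounded maps `g : X → ℝ^p` with `f × g` at most `l`-to-one is
a `G_δ`-subset of `C*(X, ℝ^p)` with the source limitation topology. -/
theorem statement14 {X Y : Type*} [TopologicalSpace X] [TopologicalSpace.MetrizableSpace X]
    [TopologicalSpace Y] [TopologicalSpace.MetrizableSpace Y]
    (p l : ℕ) (hp : 1 ≤ p) (hl : 1 ≤ l) (f : X → Y) (hf : IsPerfectMap f)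
    (hfsurj : Function.Surjective f) (hfdim : DimMapLE f 0) :
    @IsGδ _ (sourceLimitation X (EuclideanSpace ℝ (Fin p)))
      {g : X →ᵇ EuclideanSpace ℝ (Fin p) |
        ∀ z : Y × EuclideanSpace ℝ (Fin p),
          ∀ S : Finset X, (∀ x ∈ S, (f x, g x) = z) → S.card ≤ l} := by
  classical
  letI : MetricSpace X := TopologicalSpace.metrizableSpaceMetric X
  set E := EuclideanSpace ℝ (Fin p) with hE
  set m := l + 1 with hm
  set G : ℕ → Set (X →ᵇ E) := fun n =>
    {g | ∀ t : Fin m → X, (∀ i j, f (t i) = f (t j)) →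
      (∀ i j, i ≠ j → 1 / ((n : ℝ) + 1) ≤ dist (t i) (t j)) →
      ∃ i j, g (t i) ≠ g (t j)} with hG
  refine ⟨Set.range G, ?_, Set.countable_range G, ?_⟩
  · rintro _ ⟨n, rfl⟩
    show ∀ g ∈ G n, ∃ α : X → ℝ, Continuous α ∧ (∀ x, 0 < α x) ∧
      ∀ h : X →ᵇ E, (∀ x, dist (h x) (g x) ≤ α x) → h ∈ G n
    intro g hg
    simp only [hG, Set.mem_setOf_eq] at hg
    set K : Set (Fin m → X) := {t | (∀ i j, f (t i) = f (t j)) ∧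
      ∀ i j, i ≠ j → 1 / ((n : ℝ) + 1) ≤ dist (t i) (t j)} with hK
    have hfc : Continuous f := hf.1
    have hKclosed : IsClosed K := by
      have e : K = (⋂ i, ⋂ j, {t : Fin m → X | f (t i) = f (t j)}) ∩
          (⋂ i, ⋂ j, {t : Fin m → X | i ≠ j → 1 / ((n : ℝ) + 1) ≤ dist (t i) (t j)}) := by
        ext t
        simp only [hK, Set.mem_setOf_eq, Set.mem_inter_iff, Set.mem_iInter]
      rw [e]
      refine IsClosed.inter ?_ ?_
      · exact isClosed_iInter fun i => isClosed_iInter fun j =>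
          isClosed_eq (hfc.comp (continuous_apply i)) (hfc.comp (continuous_apply j))
      · refine isClosed_iInter fun i => isClosed_iInter fun j => ?_
        rcases eq_or_ne i j with rfl | hij
        · simp
        · have e2 : {t : Fin m → X | i ≠ j → 1 / ((n : ℝ) + 1) ≤ dist (t i) (t j)}
              = {t : Fin m → X | 1 / ((n : ℝ) + 1) ≤ dist (t i) (t j)} := by
            ext t; simp [hij]
          rw [e2]
          exact isClosed_le continuous_const ((continuous_apply i).dist (continuous_apply j))
    set sprd : (Fin m → X) → ℝ :=
      fun t => ∑ i : Fin m, ∑ j : Fin m, dist (g (t i)) (g (t j)) with hsprd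
    have hsprdc : Continuous sprd := by
      apply continuous_finset_sum _ fun i _ => ?_
      apply continuous_finset_sum _ fun j _ => ?_
      exact (g.continuous.comp (continuous_apply i)).dist (g.continuous.comp (continuous_apply j))
    have hsprd0 : ∀ t, 0 ≤ sprd t := fun t =>
      Finset.sum_nonneg fun i _ => Finset.sum_nonneg fun j _ => dist_nonneg
    set Ky : Y → Set (Fin m → X) := fun y => {t | t ∈ K ∧ ∀ i, f (t i) = y} with hKy
    have hKyc : ∀ y, IsCompact (Ky y) := by
      intro y
      have e : Ky y = (Set.univ.pi fun _ : Fin m => f ⁻¹' {y}) ∩ K := by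
        ext t
        simp only [hKy, Set.mem_setOf_eq, Set.mem_inter_iff, Set.mem_univ_pi,
          Set.mem_preimage, Set.mem_singleton_iff]
        tauto
      rw [e]
      exact (isCompact_univ_pi fun _ => hf.2.2 y).inter_right hKclosed
    set μ : Y → ℝ := fun y => sInf (insert (1:ℝ) (sprd '' Ky y)) with hμ
    have hbddim : ∀ y, BddBelow (sprd '' Ky y) := by
      intro y
      exact ⟨0, by rintro r ⟨t, _, rfl⟩; exact hsprd0 t⟩
    have hbdd : ∀ y, BddBelow (insert (1:ℝ) (sprd '' Ky y)) := by
      intro y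
      refine ⟨0, ?_⟩
      intro r hr
      rcases Set.mem_insert_iff.1 hr with rfl | hr2
      · norm_num
      · obtain ⟨t, _, rfl⟩ := hr2; exact hsprd0 t
    have hμ_le : ∀ y, ∀ t ∈ Ky y, μ y ≤ sprd t := fun y t ht =>
      csInf_le (hbdd y) (Set.mem_insert_of_mem _ ⟨t, ht, rfl⟩)
    have hμ_le_one : ∀ y, μ y ≤ 1 := fun y => csInf_le (hbdd y) (Set.mem_insert _ _)
    have hμpos : ∀ y, 0 < μ y := by
      intro y
      rcases (Ky y).eq_empty_or_nonempty with he | hne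
      · have : μ y = 1 := by rw [hμ]; simp [he]
        rw [this]; norm_num
      · have himc : IsCompact (sprd '' Ky y) := (hKyc y).image hsprdc
        have himne : (sprd '' Ky y).Nonempty := hne.image _
        obtain ⟨t0, ht0, hteq⟩ := himc.sInf_mem himne
        have ht0pos : 0 < sprd t0 := by
          obtain ⟨i, j, hij⟩ := hg t0 ht0.1.1 ht0.1.2
          have hdij : 0 < dist (g (t0 i)) (g (t0 j)) := dist_pos.2 hij
          have h1 : dist (g (t0 i)) (g (t0 j)) ≤ ∑ j' : Fin m, dist (g (t0 i)) (g (t0 j')) :=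
            Finset.single_le_sum (f := fun j' => dist (g (t0 i)) (g (t0 j')))
              (fun j' _ => dist_nonneg) (Finset.mem_univ j)
          have h2 : (∑ j' : Fin m, dist (g (t0 i)) (g (t0 j'))) ≤ sprd t0 :=
            Finset.single_le_sum (f := fun i' => ∑ j' : Fin m, dist (g (t0 i')) (g (t0 j')))
              (fun i' _ => Finset.sum_nonneg fun _ _ => dist_nonneg) (Finset.mem_univ i)
          linarith
        have hmin : min 1 (sprd t0) ≤ μ y := by
          refine le_csInf (Set.insert_nonempty _ _) ?_
          intro b hb
          rcases Set.mem_insert_iff.1 hb with rfl | hb2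
          · exact min_le_left _ _
          · obtain ⟨t, ht, rfl⟩ := hb2
            calc min 1 (sprd t0) ≤ sprd t0 := min_le_right _ _
              _ = sInf (sprd '' Ky y) := hteq
              _ ≤ sprd t := csInf_le (hbddim y) ⟨t, ht, rfl⟩
        exact lt_of_lt_of_le (lt_min one_pos ht0pos) hmin
    have hFproper : IsProperMap (fun (t : Fin m → X) (i : Fin m) => f (t i)) :=
      IsProperMap.pi_map fun _ =>
        isProperMap_iff_isClosedMap_and_compact_fibers.2 ⟨hf.1, hf.2.1, hf.2.2⟩
    have hclμ : ∀ c : ℝ, IsClosed {y | μ y ≤ c} := by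
      intro c
      rcases le_or_gt 1 c with hc | hc
      · have e : {y | μ y ≤ c} = Set.univ :=
          Set.eq_univ_of_forall fun y => le_trans (hμ_le_one y) hc
        rw [e]; exact isClosed_univ
      · have e : {y | μ y ≤ c} =
            (fun (y : Y) (_ : Fin m) => y) ⁻¹'
              ((fun (t : Fin m → X) (i : Fin m) => f (t i)) '' (K ∩ {t | sprd t ≤ c})) := by
          ext y
          simp only [Set.mem_setOf_eq, Set.mem_preimage, Set.mem_image]
          constructor
          · intro hyc
            have hne : (Ky y).Nonempty := by
              by_contra hemp
              rw [Set.not_nonempty_iff_eq_empty] at hemp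
              have h1 : μ y = 1 := by rw [hμ]; simp [hemp]
              rw [h1] at hyc; linarith
            have himne : (sprd '' Ky y).Nonempty := hne.image _
            have hins : μ y = 1 ⊓ sInf (sprd '' Ky y) := by
              rw [hμ]; exact csInf_insert (hbddim y) himne
            have h2 : sInf (sprd '' Ky y) ≤ c := by
              rw [hins] at hyc
              rcases inf_le_iff.1 hyc with h | h
              · linarith
              · exact h
            obtain ⟨t0, ht0, hteq⟩ := ((hKyc y).image hsprdc).sInf_mem himne
            refine ⟨t0, ⟨ht0.1, by rw [Set.mem_setOf_eq, hteq]; exact h2⟩, ?_⟩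
            funext i
            exact ht0.2 i
          · rintro ⟨t, ⟨htK, htc⟩, hteq⟩
            have hty : ∀ i, f (t i) = y := fun i => congrFun hteq i
            exact le_trans (hμ_le y t ⟨htK, hty⟩) htc
        rw [e]
        have hCclosed : IsClosed (K ∩ {t | sprd t ≤ c}) :=
          hKclosed.inter (isClosed_le hsprdc continuous_const)
        exact (hFproper.isClosedMap _ hCclosed).preimage (continuous_pi fun _ => continuous_id)
    set φ : X → ℝ := fun x => μ (f x) / (4 * (m : ℝ) ^ 2) with hφ
    have hmpos : (0:ℝ) < (m : ℝ) := by
      rw [hm]; push_cast; linarith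
    have hφpos : ∀ x, 0 < φ x := by
      intro x
      have := hμpos (f x)
      rw [hφ]
      positivity
    have hφcl : ∀ c : ℝ, IsClosed {x | φ x ≤ c} := by
      intro c
      have e : {x | φ x ≤ c} = f ⁻¹' {y | μ y ≤ 4 * (m : ℝ) ^ 2 * c} := by
        ext x
        simp only [Set.mem_setOf_eq, Set.mem_preimage, hφ]
        rw [div_le_iff₀ (by positivity)]
        constructor <;> intro h <;> linarith
      rw [e]; exact (hclμ _).preimage hf.1
    obtain ⟨α, hαc, hαpos, hαle⟩ := exists_cont_minorant φ hφpos hφcl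
    refine ⟨α, hαc, hαpos, ?_⟩
    intro h hh
    simp only [hG, Set.mem_setOf_eq]
    intro t hconst hsep
    by_contra hcon
    push_neg at hcon
    have htK : t ∈ Ky (f (t 0)) := ⟨⟨hconst, hsep⟩, fun i => hconst i 0⟩
    have hμle := hμ_le (f (t 0)) t htK
    have hterm : ∀ i j : Fin m,
        dist (g (t i)) (g (t j)) ≤ μ (f (t 0)) / (2 * (m : ℝ) ^ 2) := by
      intro i j
      have h1 : dist (g (t i)) (g (t j)) ≤
          dist (g (t i)) (h (t i)) + dist (h (t i)) (h (t j)) + dist (h (t j)) (g (t j)) :=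
        dist_triangle4 _ _ _ _
      have h2 : dist (h (t i)) (h (t j)) = 0 := by rw [hcon i j, dist_self]
      have h3 : dist (g (t i)) (h (t i)) ≤ α (t i) := by rw [dist_comm]; exact hh (t i)
      have h4 : dist (h (t j)) (g (t j)) ≤ α (t j) := hh (t j)
      have h5 : α (t i) ≤ φ (t i) := hαle _
      have h6 : α (t j) ≤ φ (t j) := hαle _
      have h7 : φ (t i) = μ (f (t 0)) / (4 * (m : ℝ) ^ 2) := by
        simp only [hφ]; rw [hconst i 0]
      have h8 : φ (t j) = μ (f (t 0)) / (4 * (m : ℝ) ^ 2) := by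
        simp only [hφ]; rw [hconst j 0]
      have h9 : μ (f (t 0)) / (4 * (m : ℝ) ^ 2) + μ (f (t 0)) / (4 * (m : ℝ) ^ 2)
          = μ (f (t 0)) / (2 * (m : ℝ) ^ 2) := by ring
      linarith
    have hsum : sprd t ≤ (m : ℝ) * ((m : ℝ) * (μ (f (t 0)) / (2 * (m : ℝ) ^ 2))) := by
      have h1 : sprd t ≤ ∑ _i : Fin m, ∑ _j : Fin m, μ (f (t 0)) / (2 * (m : ℝ) ^ 2) :=
        Finset.sum_le_sum fun i _ => Finset.sum_le_sum fun j _ => hterm i j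
      simpa [Finset.sum_const, Finset.card_univ, nsmul_eq_mul, mul_assoc] using h1
    have heq : (m : ℝ) * ((m : ℝ) * (μ (f (t 0)) / (2 * (m : ℝ) ^ 2))) = μ (f (t 0)) / 2 := by
      field_simp
    rw [heq] at hsum
    have := hμpos (f (t 0))
    linarith
  · rw [Set.sInter_range]
    ext g
    simp only [Set.mem_setOf_eq, Set.mem_iInter, hG]
    constructor
    · intro hgT n t hconst hsep
      by_contra hcon
      push_neg at hcon
      have hinj : Function.Injective t := by
        intro i j hij
        by_contra hne
        have h1 := hsep i j hne
        rw [hij, dist_self] at h1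
        have h2 : (0:ℝ) < 1 / ((n : ℝ) + 1) := by positivity
        linarith
      have hcard : (Finset.image t Finset.univ).card = m := by
        rw [Finset.card_image_of_injective _ hinj, Finset.card_univ, Fintype.card_fin]
      have hle := hgT (f (t 0), g (t 0)) (Finset.image t Finset.univ) ?_
      · rw [hcard] at hle; omega
      · intro x hx
        obtain ⟨i, _, rfl⟩ := Finset.mem_image.1 hx
        exact Prod.ext (hconst i 0) (hcon i 0)
    · intro hgG z S hS
      by_contra hcard
      push_neg at hcard
      obtain ⟨S', hS'sub, hS'card⟩ := Finset.exists_subset_card_eq (by omega : m ≤ S.card)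
      have e := S'.equivFinOfCardEq hS'card
      set t : Fin m → X := fun i => ((e.symm i : S') : X) with ht
      have hmemS : ∀ i, t i ∈ S := fun i => hS'sub (e.symm i).2
      have hfst : ∀ i, f (t i) = z.1 := fun i => congrArg Prod.fst (hS _ (hmemS i))
      have hsnd : ∀ i, g (t i) = z.2 := fun i => congrArg Prod.snd (hS _ (hmemS i))
      have hinj : Function.Injective t := by
        intro i j hij
        exact e.symm.injective (Subtype.ext hij)
      have hP : ((Finset.univ : Finset (Fin m × Fin m)).filter
          fun q => q.1 ≠ q.2).Nonempty := by
        refine ⟨(⟨0, by omega⟩, ⟨1, by omega⟩), ?_⟩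
        simp [Fin.ext_iff]
      set δ : ℝ := ((Finset.univ : Finset (Fin m × Fin m)).filter fun q => q.1 ≠ q.2).inf' hP
        (fun q => dist (t q.1) (t q.2)) with hδ
      have hδpos : 0 < δ := by
        rw [hδ, Finset.lt_inf'_iff]
        intro q hq
        have hq2 : q.1 ≠ q.2 := (Finset.mem_filter.1 hq).2
        exact dist_pos.2 fun hEq => hq2 (hinj hEq)
      obtain ⟨n, hn⟩ := exists_nat_one_div_lt hδpos
      have hsep' : ∀ i j : Fin m, i ≠ j → 1 / ((n : ℝ) + 1) ≤ dist (t i) (t j) := by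
        intro i j hne
        have hmem : (i, j) ∈ (Finset.univ : Finset (Fin m × Fin m)).filter
            fun q => q.1 ≠ q.2 := Finset.mem_filter.2 ⟨Finset.mem_univ _, hne⟩
        have := Finset.inf'_le (fun q : Fin m × Fin m => dist (t q.1) (t q.2)) hmem
        rw [← hδ] at this
        linarith
      obtain ⟨i, j, hij⟩ := hgG n t (fun i j => (hfst i).trans (hfst j).symm) hsep'
      exact hij ((hsnd i).trans (hsnd j).symm)
end

section
/- Let X be a metrizable space and p ≥ 1. Then the set C*(X, ℝ^p) of bounded continuous maps from X into ℝ^p is open in C(X, ℝ^p) with respect to the source limitation topology generated by the Euclidean metric on ℝ^p; consequently C*(X, ℝ^p), equipped with this topology, has the Baire property. -/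
open Set Topology Metric BoundedContinuousFunction

/-- The source limitation topology on the space of all continuous maps. -/
def sourceLimitationCM (X E : Type*) [TopologicalSpace X] [PseudoMetricSpace E] :
    TopologicalSpace C(X, E) where
  IsOpen U := ∀ g ∈ U, ∃ α : X → ℝ, Continuous α ∧ (∀ x, 0 < α x) ∧
    ∀ h : C(X, E), (∀ x, dist (h x) (g x) ≤ α x) → h ∈ U
  isOpen_univ := fun g _ =>
    ⟨fun _ => 1, continuous_const, fun _ => one_pos, fun _ _ => trivial⟩
  isOpen_inter := by
    rintro U V hU hV g ⟨hgU, hgV⟩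
    obtain ⟨α, hαc, hαp, hα⟩ := hU g hgU
    obtain ⟨β, hβc, hβp, hβ⟩ := hV g hgV
    exact ⟨fun x => min (α x) (β x), hαc.min hβc, fun x => lt_min (hαp x) (hβp x),
      fun h hh => ⟨hα h fun x => (hh x).trans (min_le_left _ _),
        hβ h fun x => (hh x).trans (min_le_right _ _)⟩⟩
  isOpen_sUnion := by
    rintro S hS g ⟨U, hU, hgU⟩
    obtain ⟨α, hc, hp, h⟩ := hS U hU g hgU
    exact ⟨α, hc, hp, fun h' hh' => ⟨U, hU, h h' hh'⟩⟩


/-!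
A map within a bounded distance of a bounded map is bounded, so a bounded map has the constant
`1` as a radius of a neighbourhood of bounded maps. For the Baire property, run the usual
nested-balls argument with "balls" `{h | ∀ x, dist (h x) (g x) ≤ β x}` of continuous positive
radius `β`: each dense open set meets the open ball of radius `β` about the current centre,
and since the radii can be forced below `2⁻ⁿ`, the centres converge uniformly to a continuous
map, which is bounded and lies in every ball.
-/

open Filter

section SourceLimitation

variable {X E : Type*} [TopologicalSpace X] [PseudoMetricSpace E]

def sourceClosedBall (g : C(X, E)) (β : X → ℝ) : Set C(X, E) :=
  {h | ∀ x, dist (h x) (g x) ≤ β x}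

lemma self_mem_sourceClosedBall {g : C(X, E)} {β : X → ℝ} (hβ : ∀ x, 0 ≤ β x) :
    g ∈ sourceClosedBall g β :=
  fun x => by simpa using hβ x

lemma sourceClosedBall_subset {g g' : C(X, E)} {β β' : X → ℝ}
    (h : ∀ x, dist (g' x) (g x) + β' x ≤ β x) :
    sourceClosedBall g' β' ⊆ sourceClosedBall g β :=
  fun f hf x => by linarith [dist_triangle (f x) (g' x) (g x), hf x, h x]

lemma Bornology.IsBounded.range_of_forall_dist_le {Y : Type*} {f g : Y → E} {C : ℝ}
    (hg : Bornology.IsBounded (range g)) (h : ∀ y, dist (f y) (g y) ≤ C) :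
    Bornology.IsBounded (range f) :=
  hg.cthickening.subset <| range_subset_iff.2 fun y =>
    mem_cthickening_of_dist_le _ _ _ _ (mem_range_self y) (h y)

lemma isOpen_setOf_isBounded_range :
    IsOpen[sourceLimitationCM X E] {u : C(X, E) | Bornology.IsBounded (range u)} :=
  fun _ hg => ⟨fun _ => 1, continuous_const, fun _ => one_pos,
    fun _ hh => hg.range_of_forall_dist_le hh⟩

lemma isOpen_setOf_forall_dist_lt {g : C(X, E)} {β : X → ℝ} (hβ : Continuous β) :
    IsOpen[sourceLimitationCM X E] {h | ∀ x, dist (h x) (g x) < β x} := by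
  intro h hh
  refine ⟨fun x => (β x - dist (h x) (g x)) / 2, by fun_prop, fun x => by linarith [hh x],
    fun f hf x => ?_⟩
  linarith [hf x, hh x, dist_triangle (f x) (h x) (g x)]

variable {s : Set C(X, E)} {U : Set s}

lemma exists_sourceClosedBall_subset
    (hU : IsOpen[.induced Subtype.val (sourceLimitationCM X E)] U) {u : s} (hu : u ∈ U) :
    ∃ α : X → ℝ, Continuous α ∧ (∀ x, 0 < α x) ∧
      Subtype.val ⁻¹' sourceClosedBall u α ⊆ U := by
  let _ := sourceLimitationCM X E
  obtain ⟨W, hW, rfl⟩ := isOpen_induced_iff.1 hU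
  obtain ⟨α, hαc, hαp, hα⟩ := hW u hu
  exact ⟨α, hαc, hαp, fun h hh => hα h hh⟩

lemma exists_sourceClosedBall_subset_of_dense
    (hUo : IsOpen[.induced Subtype.val (sourceLimitationCM X E)] U)
    (hUd : @Dense s (.induced Subtype.val (sourceLimitationCM X E)) U)
    (g : s) {β : X → ℝ} (hβc : Continuous β) (hβp : ∀ x, 0 < β x) {ε : ℝ} (hε : 0 < ε) :
    ∃ (g' : s) (β' : X → ℝ), Continuous β' ∧ (∀ x, 0 < β' x) ∧ (∀ x, β' x ≤ ε) ∧
      (∀ x, dist (g'.1 x) (g.1 x) + β' x ≤ β x) ∧ Subtype.val ⁻¹' sourceClosedBall g' β' ⊆ U := by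
  let _ := sourceLimitationCM X E
  obtain ⟨g', hg'g : ∀ x, dist (g'.1 x) (g.1 x) < β x, hg'U⟩ := hUd.inter_open_nonempty _
    (isOpen_induced_iff.2 ⟨_, isOpen_setOf_forall_dist_lt (g := g.1) hβc, rfl⟩)
    ⟨g, fun x => by simpa using hβp x⟩
  obtain ⟨α, hαc, hαp, hα⟩ := exists_sourceClosedBall_subset hUo hg'U
  refine ⟨g', fun x => min (α x) (min ε (β x - dist (g'.1 x) (g.1 x))), by fun_prop,
    fun x => lt_min (hαp x) (lt_min hε (by linarith [hg'g x])),
    fun x => (min_le_right _ _).trans (min_le_left _ _),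
    fun x => by
      linarith [(min_le_right (α x) _).trans (min_le_right ε (β x - dist (g'.1 x) (g.1 x)))],
    fun h hh => hα fun x => (hh x).trans (min_le_left _ _)⟩

lemma exists_forall_mem_sourceClosedBall [CompleteSpace E] {g : ℕ → C(X, E)}
    {β : ℕ → X → ℝ} {ε : ℕ → ℝ} (hβ0 : ∀ n x, 0 ≤ β n x)
    (hnest : ∀ n x, dist (g (n + 1) x) (g n x) + β (n + 1) x ≤ β n x)
    (hβε : ∀ n x, β n x ≤ ε n) (hε : Tendsto ε atTop (𝓝 0)) :
    ∃ G : C(X, E), ∀ n, G ∈ sourceClosedBall (g n) (β n) := by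
  have hanti : Antitone fun n => sourceClosedBall (g n) (β n) :=
    antitone_nat_of_succ_le fun n => sourceClosedBall_subset (hnest n)
  have hg : ∀ n m, n ≤ m → ∀ x, dist (g m x) (g n x) ≤ β n x := fun n m hnm =>
    hanti hnm (self_mem_sourceClosedBall (hβ0 m))
  have hcauchy : ∀ x, CauchySeq fun n => g n x := fun x => by
    refine Metric.cauchySeq_iff'.2 fun δ hδ => ?_
    obtain ⟨N, hN⟩ := (hε.eventually (gt_mem_nhds hδ)).exists
    exact ⟨N, fun m hm => (hg N m hm x).trans_lt ((hβε N x).trans_lt hN)⟩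
  choose L hL using fun x => cauchySeq_tendsto_of_complete (hcauchy x)
  have hLg : ∀ n x, dist (L x) (g n x) ≤ β n x := fun n x =>
    le_of_tendsto ((hL x).dist tendsto_const_nhds)
      (eventually_atTop.2 ⟨n, fun m hm => hg n m hm x⟩)
  have hunif : TendstoUniformly (fun n x => g n x) L atTop := by
    refine Metric.tendstoUniformly_iff.2 fun δ hδ => ?_
    filter_upwards [hε.eventually (gt_mem_nhds hδ)] with n hn x
    exact (hLg n x).trans_lt ((hβε n x).trans_lt hn)
  exact ⟨⟨L, hunif.continuous (.of_forall fun n => (g n).continuous)⟩, hLg⟩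

theorem baireSpace_setOf_isBounded_range [CompleteSpace E] :
    @BaireSpace {u : C(X, E) | Bornology.IsBounded (range u)}
      (.induced Subtype.val (sourceLimitationCM X E)) := by
  let _ := sourceLimitationCM X E
  set S := {u : C(X, E) | Bornology.IsBounded (range u)}
  refine ⟨fun f hfo hfd => dense_iff_inter_open.2 fun V hVo ⟨u₀, hu₀⟩ => ?_⟩
  obtain ⟨α₀, hα₀c, hα₀p, hα₀V⟩ := exists_sourceClosedBall_subset hVo hu₀
  let Ball := {q : S × (X → ℝ) // Continuous q.2 ∧ ∀ x, 0 < q.2 x}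
  have step (n : ℕ) (q : Ball) : ∃ q' : Ball, (∀ x, q'.1.2 x ≤ (1 / 2) ^ (n + 1)) ∧
      (∀ x, dist (q'.1.1.1 x) (q.1.1.1 x) + q'.1.2 x ≤ q.1.2 x) ∧
      Subtype.val ⁻¹' sourceClosedBall q'.1.1 q'.1.2 ⊆ f n := by
    obtain ⟨g', β', hc, hp, hε, hnest, hsub⟩ := exists_sourceClosedBall_subset_of_dense
      (hfo n) (hfd n) q.1.1 q.2.1 q.2.2 (by positivity : (0 : ℝ) < (1 / 2) ^ (n + 1))
    exact ⟨⟨(g', β'), hc, hp⟩, hε, hnest, hsub⟩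
  choose next hnext using step
  let q : ℕ → Ball := fun n => Nat.rec
    ⟨(u₀, fun x => min (α₀ x) 1), by fun_prop, fun x => lt_min (hα₀p x) one_pos⟩ next n
  have hsmall : ∀ n x, (q n).1.2 x ≤ (1 / 2) ^ n
    | 0, x => (min_le_right (α₀ x) 1).trans_eq (pow_zero _).symm
    | n + 1, x => (hnext n (q n)).1 x
  obtain ⟨G, hG⟩ := exists_forall_mem_sourceClosedBall (g := fun n => (q n).1.1.1)
    (fun n x => ((q n).2.2 x).le) (fun n => (hnext n (q n)).2.1) hsmall
    (tendsto_pow_atTop_nhds_zero_of_lt_one (by norm_num) (by norm_num))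
  have hGS : G ∈ S :=
    (q 0).1.1.2.range_of_forall_dist_le fun x => (hG 0 x).trans (min_le_right _ _)
  exact ⟨⟨G, hGS⟩, hα₀V fun x => (hG 0 x).trans (min_le_left _ _),
    mem_iInter.2 fun n => (hnext n (q n)).2.2 (hG (n + 1))⟩

end SourceLimitation

theorem statement15_general {X : Type*} [TopologicalSpace X]
    (p : ℕ) :
    @IsOpen _ (sourceLimitationCM X (EuclideanSpace ℝ (Fin p)))
      {u : C(X, EuclideanSpace ℝ (Fin p)) | Bornology.IsBounded (Set.range u)} ∧
    @BaireSpace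
      {u : C(X, EuclideanSpace ℝ (Fin p)) | Bornology.IsBounded (Set.range u)}
      (TopologicalSpace.induced Subtype.val
        (sourceLimitationCM X (EuclideanSpace ℝ (Fin p)))) :=
  ⟨isOpen_setOf_isBounded_range, baireSpace_setOf_isBounded_range⟩

/-- `C*(X, ℝ^p)` is open in `C(X, ℝ^p)` with respect to the source
limitation topology; consequently `C*(X, ℝ^p)` with the (induced) source limitation
topology is a Baire space. -/
theorem statement15 {X : Type*} [TopologicalSpace X] [TopologicalSpace.MetrizableSpace X]
    (p : ℕ) (hp : 1 ≤ p) :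
    @IsOpen _ (sourceLimitationCM X (EuclideanSpace ℝ (Fin p)))
      {u : C(X, EuclideanSpace ℝ (Fin p)) | Bornology.IsBounded (Set.range u)} ∧
    @BaireSpace
      {u : C(X, EuclideanSpace ℝ (Fin p)) | Bornology.IsBounded (Set.range u)}
      (TopologicalSpace.induced Subtype.val
        (sourceLimitationCM X (EuclideanSpace ℝ (Fin p)))) :=
  statement15_general p
end

section
/- Let m ≥ 2 and let T be a metrizable compactum with dim T ≤ m that is not embeddable in ℝ^{2m}. Let X = 𝕀^m ⊕ T be the disjoint topological sum, fix a point x₀ ∈ 𝕀^m, and define f : X → 𝕀^m by f(x) = x for x ∈ 𝕀^m and f(x) = x₀ for x ∈ T. Then there is no continuous map g : X → ℝ^{m+2} satisfying dim B_n(f×g) ≤ n·dim X − (n−1)·(m + 2 + dim 𝕀^m) for every n ≥ 1; in particular, any such g would embed T into ℝ^{m+2}, which is impossible since m + 2 ≤ 2m. -/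
open Set Topology Metric BoundedContinuousFunction

/-!
If `f × g` satisfied the bound for `n = 2`, then `dim B₂(f × g) ≤ 2m - (2m + 2) = -2`, so
`B₂(f × g)` would be empty and `f × g` injective. Since `f` is constant on `T`, `g` would then be
injective on the compactum `T`, hence an embedding `T ↪ ℝ^{m+2} ⊆ ℝ^{2m}` (as `m ≥ 2`).
-/

open Function

theorem CovDimLE.isEmpty_of_neg {X : Type*} [TopologicalSpace X] {n : ℤ} (h : CovDimLE X n)
    (hn : n < 0) : IsEmpty X := by
  rcases h with h | ⟨k, hk, -⟩
  · exact h
  · omega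

theorem injective_of_isEmpty_branchSet_two {X Z : Type*} {h : X → Z}
    (h2 : IsEmpty (BranchSet h 2)) : Injective h := by
  classical
  intro x y hxy
  by_contra hne
  refine h2.false ⟨h x, {x, y}, ?_, ?_⟩
  · rw [Finset.card_pair hne]
  · simp [hxy]

theorem exists_isClosedEmbedding_euclideanSpace {ι κ : Type*} [Fintype ι] [Fintype κ]
    (σ : ι ↪ κ) :
    ∃ e : EuclideanSpace ℝ ι → EuclideanSpace ℝ κ, IsClosedEmbedding e := by
  let L : EuclideanSpace ℝ ι →ₗ[ℝ] EuclideanSpace ℝ κ :=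
    (WithLp.linearEquiv 2 ℝ (κ → ℝ)).symm.toLinearMap ∘ₗ
      ExtendByZero.linearMap ℝ σ ∘ₗ (WithLp.linearEquiv 2 ℝ (ι → ℝ)).toLinearMap
  have hL : Injective L :=
    (WithLp.linearEquiv 2 ℝ (κ → ℝ)).symm.injective.comp <|
      (extend_injective σ.injective (0 : κ → ℝ)).comp (WithLp.linearEquiv 2 ℝ (ι → ℝ)).injective
  exact ⟨L, L.isClosedEmbedding_of_injective (LinearMap.ker_eq_bot.2 hL)⟩

theorem statement17_general {T : Type*} [TopologicalSpace T] [CompactSpace T]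
    (m : ℕ) (hm : 2 ≤ m)
    (hnoemb : ¬ ∃ e : T → EuclideanSpace ℝ (Fin (2 * m)), IsEmbedding e)
    (x₀ : Fin m → unitInterval) :
    ¬ ∃ g : ((Fin m → unitInterval) ⊕ T) → EuclideanSpace ℝ (Fin (m + 2)),
        Continuous g ∧ ∀ n : ℕ, 1 ≤ n →
          CovDimLE
            (BranchSet (fun x : (Fin m → unitInterval) ⊕ T =>
              (Sum.elim id (fun _ => x₀) x, g x)) n)
            ((n : ℤ) * m - ((n : ℤ) - 1) * ((m : ℤ) + 2 + m)) := by
  rintro ⟨g, hg, hdim⟩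
  have hinj := injective_of_isEmpty_branchSet_two <|
    (hdim 2 one_le_two).isEmpty_of_neg (by push_cast; omega)
  have hgT : Injective (g ∘ Sum.inr) := fun s t hst =>
    Sum.inr_injective (hinj (a₁ := .inr s) (a₂ := .inr t) (Prod.ext rfl hst))
  obtain ⟨e, he⟩ :=
    exists_isClosedEmbedding_euclideanSpace (Fin.castLEEmb (by omega : m + 2 ≤ 2 * m))
  exact hnoemb ⟨e ∘ g ∘ Sum.inr,
    (he.comp ((hg.comp continuous_inr).isClosedEmbedding hgT)).isEmbedding⟩

/-- (Bogatyi's example) Let `T` be a compactum with `dim T ≤ m`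
(`m ≥ 2`) not embeddable into `ℝ^{2m}`, let `X = 𝕀^m ⊕ T` and let `f : X → 𝕀^m` be the
identity on `𝕀^m` and constant `x₀` on `T` (here `dim X = m` and `dim 𝕀^m = m`). Then no
continuous map `g : X → ℝ^{m+2}` satisfies
`dim B_n(f × g) ≤ n ⬝ dim X - (n - 1)(m + 2 + dim 𝕀^m)` for all `n ≥ 1`. -/
theorem statement17 {T : Type*} [TopologicalSpace T] [CompactSpace T]
    [TopologicalSpace.MetrizableSpace T]
    (m : ℕ) (hm : 2 ≤ m) (hdimT : CovDimLENat T m)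
    (hnoemb : ¬ ∃ e : T → EuclideanSpace ℝ (Fin (2 * m)), IsEmbedding e)
    (x₀ : Fin m → unitInterval) :
    ¬ ∃ g : ((Fin m → unitInterval) ⊕ T) → EuclideanSpace ℝ (Fin (m + 2)),
        Continuous g ∧ ∀ n : ℕ, 1 ≤ n →
          CovDimLE
            (BranchSet (fun x : (Fin m → unitInterval) ⊕ T =>
              (Sum.elim id (fun _ => x₀) x, g x)) n)
            ((n : ℤ) * m - ((n : ℤ) - 1) * ((m : ℤ) + 2 + m)) :=
  statement17_general m hm hnoemb x₀
end

section
/- Let K be a metrizable compactum with dim K ≤ n, let 0 ≤ k ≤ n and m ≥ 1, and let π : 𝕀^m × K → 𝕀^m be the projection. If every map in C(𝕀^m × K, ℝ^n) can be approximated, uniformly to any prescribed accuracy, by maps g₁ with π×g₁ 0-dimensional, then every map in C(𝕀^m × K, ℝ^k) can be approximated, uniformly to any prescribed accuracy, by maps g with π×g (n − k)-dimensional. (Namely, lift h ∈ C(𝕀^m × K, ℝ^k) to h₁ with h = p∘h₁, where p : ℝ^n → ℝ^k is the canonical projection, approximate h₁ by g₁ with π×g₁ 0-dimensional, and take g = p∘g₁.)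 -/
open Set Topology Metric BoundedContinuousFunction

/-!
Lift `h` through the coordinate projection `p : ℝⁿ → ℝᵏ`, approximate the lift by `g₁` with
`π × g₁` zero-dimensional and put `g = p ∘ g₁`. The last `n - k` coordinates of `g₁` map a fiber
of `π × g` to `ℝⁿ⁻ᵏ` with fibers that are fibers of `π × g₁`, so the fiber has dimension at most
`n - k` by Hurewicz's theorem on maps with zero-dimensional fibers. For that theorem, given a
finite open cover of a compactum `X` and `f : X → ℝ^d`, each fiber of `f` has a neighbourhood
`f⁻¹ O` covered by finitely many disjoint open sets refining the cover; cutting these by the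
preimages of the open stars of a fine triangulation of `ℝ^d`, which have order `d + 1`, gives a
refinement of order `d + 1`.
-/

theorem CovDimLENat.of_homeomorph {A B : Type*} [TopologicalSpace A] [TopologicalSpace B]
    (e : A ≃ₜ B) {i : ℕ} (h : CovDimLENat B i) : CovDimLENat A i := by
  intro 𝒰 hfin hopen hcov
  obtain ⟨𝒱, hVopen, hVcov, hVref, hVord⟩ := h ((e.symm ⁻¹' ·) '' 𝒰) (hfin.image _)
    (by rintro _ ⟨U, hU, rfl⟩; exact (hopen U hU).preimage e.symm.continuous)
    (by rw [sUnion_image, ← preimage_iUnion₂, ← sUnion_eq_biUnion, hcov, preimage_univ])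
  have hinj : Function.Injective (e ⁻¹' · : Set B → Set A) :=
    preimage_injective.mpr e.surjective
  refine ⟨(e ⁻¹' ·) '' 𝒱, ?_, ?_, ?_, fun x => ?_⟩
  · rintro _ ⟨V, hV, rfl⟩
    exact (hVopen V hV).preimage e.continuous
  · rw [sUnion_image, ← preimage_iUnion₂, ← sUnion_eq_biUnion, hVcov, preimage_univ]
  · rintro _ ⟨V, hV, rfl⟩
    obtain ⟨_, ⟨U, hU, rfl⟩, hVU⟩ := hVref V hV
    exact ⟨U, hU, fun a ha => by simpa using hVU ha⟩
  · have hx : {W ∈ (e ⁻¹' ·) '' 𝒱 | x ∈ W} = (e ⁻¹' ·) '' {V ∈ 𝒱 | e x ∈ V} := by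
      ext W
      constructor
      · rintro ⟨⟨V, hV, rfl⟩, hxV⟩
        exact ⟨V, ⟨hV, hxV⟩, rfl⟩
      · rintro ⟨V, ⟨hV, hxV⟩, rfl⟩
        exact ⟨⟨V, hV, rfl⟩, hxV⟩
    rw [hx, ncard_image_of_injective _ hinj]
    exact ⟨(hVord (e x)).1.image _, (hVord (e x)).2⟩

theorem CovDimLE.of_homeomorph {A B : Type*} [TopologicalSpace A] [TopologicalSpace B]
    (e : A ≃ₜ B) {i : ℤ} (h : CovDimLE B i) : CovDimLE A i := by
  rcases h with h | ⟨j, hj, hdim⟩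
  · exact Or.inl e.isEmpty
  · exact Or.inr ⟨j, hj, hdim.of_homeomorph e⟩

theorem covDimLE_fiber_comp_of_injective {X Y Z : Type*} [TopologicalSpace X] {h : X → Y}
    {j : Y → Z} (hj : Function.Injective j) {i : ℤ} (hh : ∀ y, CovDimLE (h ⁻¹' {y}) i)
    (z : Z) : CovDimLE ((j ∘ h) ⁻¹' {z}) i := by
  by_cases hz : z ∈ range j
  · obtain ⟨y, rfl⟩ := hz
    have hfiber : (j ∘ h) ⁻¹' {j y} = h ⁻¹' {y} := by
      rw [preimage_comp, ← image_singleton, hj.preimage_image]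
    exact (hh y).of_homeomorph (Homeomorph.setCongr hfiber)
  · exact Or.inl ⟨fun ⟨x, hx⟩ => hz ⟨h x, hx⟩⟩

theorem pairwiseDisjoint_of_forall_ncard_le_one {Y : Type*} {𝒱 : Set (Set Y)}
    (h : ∀ y, {V ∈ 𝒱 | y ∈ V}.Finite ∧ {V ∈ 𝒱 | y ∈ V}.ncard ≤ 1) : 𝒱.PairwiseDisjoint id :=
  fun _ hV _ hV' hne => disjoint_left.mpr fun y hyV hyV' =>
    hne (((ncard_le_one_iff (h y).1).mp (h y).2) ⟨hV, hyV⟩ ⟨hV', hyV'⟩)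

theorem isClosed_of_mem_pairwiseDisjoint_openCover {Y : Type*} [TopologicalSpace Y]
    {𝒱 : Set (Set Y)} (hopen : ∀ V ∈ 𝒱, IsOpen V) (hcov : ⋃₀ 𝒱 = univ)
    (hdisj : 𝒱.PairwiseDisjoint id) {V : Set Y} (hV : V ∈ 𝒱) : IsClosed V := by
  have hcompl : Vᶜ = ⋃₀ (𝒱 \ {V}) := by
    ext y
    obtain ⟨V', hV', hyV'⟩ : y ∈ ⋃₀ 𝒱 := hcov ▸ mem_univ y
    constructor
    · intro hyV
      exact ⟨V', ⟨hV', fun h => hyV (h ▸ hyV')⟩, hyV'⟩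
    · rintro ⟨V'', ⟨hV'', hne⟩, hyV''⟩ hyV
      exact hne (hdisj.elim_set hV'' hV y hyV'' hyV)
  rw [← isOpen_compl_iff, hcompl]
  exact isOpen_sUnion fun V' hV' => hopen V' hV'.1

theorem exists_finite_pairwiseDisjoint_compact_cover {X : Type*} [TopologicalSpace X]
    {C : Set X} (hC : IsCompact C) (hdim : CovDimLE C 0) {𝒰 : Set (Set X)} (hfin : 𝒰.Finite)
    (hopen : ∀ U ∈ 𝒰, IsOpen U) (hcov : C ⊆ ⋃₀ 𝒰) :
    ∃ 𝒦 : Set (Set X), 𝒦.Finite ∧ (∀ K ∈ 𝒦, IsCompact K) ∧ 𝒦.PairwiseDisjoint id ∧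
      (∀ K ∈ 𝒦, ∃ U ∈ 𝒰, K ⊆ U) ∧ C ⊆ ⋃₀ 𝒦 := by
  rcases hdim with hempty | ⟨j, hj, hdim⟩
  · exact ⟨∅, finite_empty, by simp, pairwiseDisjoint_empty, by simp,
      fun x hx => (hempty.false ⟨x, hx⟩).elim⟩
  obtain rfl : j = 0 := by omega
  have : CompactSpace C := isCompact_iff_compactSpace.mp hC
  obtain ⟨𝒱, hVopen, hVcov, hVref, hVord⟩ := hdim ((Subtype.val ⁻¹' ·) '' 𝒰) (hfin.image _)
    (by rintro _ ⟨U, hU, rfl⟩; exact (hopen U hU).preimage continuous_subtype_val)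
    (eq_univ_of_forall fun x => by
      obtain ⟨U, hU, hxU⟩ := hcov x.2
      exact ⟨_, ⟨U, hU, rfl⟩, hxU⟩)
  have hVdisj : 𝒱.PairwiseDisjoint id := pairwiseDisjoint_of_forall_ncard_le_one hVord
  obtain ⟨𝒱', h𝒱', hfin', hcov'⟩ := isCompact_univ.elim_finite_subcover_image
    (b := 𝒱) (c := id) hVopen (by simpa [← sUnion_eq_biUnion] using hVcov.symm.subset)
  refine ⟨(Subtype.val '' ·) '' 𝒱', hfin'.image _, ?_, ?_, ?_, fun x hx => ?_⟩
  · rintro _ ⟨V, hV, rfl⟩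
    exact (isClosed_of_mem_pairwiseDisjoint_openCover hVopen hVcov hVdisj
      (h𝒱' hV)).isCompact.image continuous_subtype_val
  · rintro _ ⟨V, hV, rfl⟩ _ ⟨V', hV', rfl⟩ hne
    exact (disjoint_image_iff Subtype.val_injective).mpr
      (hVdisj (h𝒱' hV) (h𝒱' hV') fun h => hne (h ▸ rfl))
  · rintro _ ⟨V, hV, rfl⟩
    obtain ⟨_, ⟨U, hU, rfl⟩, hVU⟩ := hVref V (h𝒱' hV)
    exact ⟨U, hU, image_subset_iff.mpr hVU⟩
  · obtain ⟨V, hV, hxV⟩ := mem_iUnion₂.mp (hcov' (mem_univ ⟨x, hx⟩))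
    exact ⟨_, ⟨V, hV, rfl⟩, ⟨x, hx⟩, hxV, rfl⟩

theorem Set.Finite.exists_pairwiseDisjoint_thickening {X : Type*} [EMetricSpace X]
    {𝒦 : Set (Set X)} (hfin : 𝒦.Finite) (hcpt : ∀ K ∈ 𝒦, IsCompact K)
    (hdisj : 𝒦.PairwiseDisjoint id) : ∃ δ > 0, 𝒦.PairwiseDisjoint (thickening δ) := by
  have hpair : ∀ p ∈ 𝒦 ×ˢ 𝒦, ∀ᶠ δ in 𝓝[>] (0 : ℝ),
      p.1 ≠ p.2 → Disjoint (thickening δ p.1) (thickening δ p.2) := by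
    rintro ⟨K, K'⟩ ⟨hK, hK'⟩
    by_cases hne : K = K'
    · exact Filter.Eventually.of_forall fun _ h => (h hne).elim
    obtain ⟨δ₀, hδ₀, hsep⟩ :=
      (hdisj hK hK' hne).exists_thickenings (hcpt K hK) (hcpt K' hK').isClosed
    filter_upwards [Ioc_mem_nhdsGT hδ₀] with δ hδ _
    exact hsep.mono (thickening_mono hδ.2 _) (thickening_mono hδ.2 _)
  obtain ⟨δ, hδ, hδpos⟩ :=
    (((hfin.prod hfin).eventually_all).mpr hpair).and self_mem_nhdsWithin |>.exists
  exact ⟨δ, hδpos, fun K hK K' hK' hne => hδ (K, K') ⟨hK, hK'⟩ hne⟩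

theorem exists_nhds_fiber_pairwiseDisjoint_refinement {X Y : Type*} [EMetricSpace X]
    [CompactSpace X] [TopologicalSpace Y] [T2Space Y] {f : X → Y} (hf : Continuous f) {y : Y}
    (hdim : CovDimLE (f ⁻¹' {y}) 0) {𝒰 : Set (Set X)} (hfin : 𝒰.Finite)
    (hopen : ∀ U ∈ 𝒰, IsOpen U) (hcov : ⋃₀ 𝒰 = univ) :
    ∃ O, IsOpen O ∧ y ∈ O ∧ ∃ 𝒲 : Set (Set X), (∀ W ∈ 𝒲, IsOpen W) ∧
      (∀ W ∈ 𝒲, ∃ U ∈ 𝒰, W ⊆ U) ∧ 𝒲.PairwiseDisjoint id ∧ f ⁻¹' O ⊆ ⋃₀ 𝒲 := by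
  obtain ⟨𝒦, h𝒦fin, h𝒦cpt, h𝒦disj, h𝒦ref, h𝒦cov⟩ :=
    exists_finite_pairwiseDisjoint_compact_cover
      ((isClosed_singleton.preimage hf).isCompact) hdim hfin hopen (hcov ▸ subset_univ _)
  obtain ⟨δ, hδ, hδdisj⟩ := h𝒦fin.exists_pairwiseDisjoint_thickening h𝒦cpt h𝒦disj
  choose! U hU hKU using h𝒦ref
  set 𝒲 := (fun K => thickening δ K ∩ U K) '' 𝒦
  have hfiber : f ⁻¹' {y} ⊆ ⋃₀ 𝒲 := fun x hx => by
    obtain ⟨K, hK, hxK⟩ := h𝒦cov hx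
    exact ⟨_, ⟨K, hK, rfl⟩, self_subset_thickening hδ K hxK, hKU K hK hxK⟩
  refine ⟨kernImage f (⋃₀ 𝒲), ?_, fun x hx => hfiber hx, 𝒲, ?_, ?_, ?_,
    subset_kernImage_iff.mp subset_rfl⟩
  · refine isClosedMap_iff_kernImage.mp hf.isClosedMap (isOpen_sUnion ?_)
    rintro _ ⟨K, hK, rfl⟩
    exact isOpen_thickening.inter (hopen _ (hU K hK))
  · rintro _ ⟨K, hK, rfl⟩
    exact isOpen_thickening.inter (hopen _ (hU K hK))
  · rintro _ ⟨K, hK, rfl⟩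
    exact ⟨U K, hU K hK, inter_subset_right⟩
  · rintro _ ⟨K, hK, rfl⟩ _ ⟨K', hK', rfl⟩ hne
    exact (hδdisj hK hK' fun h => hne (h ▸ rfl)).mono inter_subset_left inter_subset_left

section KuhnStar

variable {ι : Type*}

/-- The open star of the vertex `v` in Kuhn's triangulation of `ℝ^ι` into simplices
`{v + u | 1 ≥ u (σ 1) ≥ ⋯ ≥ u (σ d) ≥ 0}`. A point lies only in the stars of the vertices of its
carrier simplex, whence the order bound `card ι + 1`. -/
def kuhnStar (v : ι → ℤ) : Set (ι → ℝ) :=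
  {y | (∀ i, |y i - v i| < 1) ∧ ∀ i j, y j - v j < y i - v i + 1}

theorem isOpen_kuhnStar [Finite ι] (v : ι → ℤ) : IsOpen (kuhnStar v) := by
  simp only [kuhnStar, ofPred_and, ofPred_forall]
  refine .inter (isOpen_iInter_of_finite fun i => isOpen_lt (by fun_prop) continuous_const)
    (isOpen_iInter_of_finite fun i => isOpen_iInter_of_finite fun j => isOpen_lt ?_ ?_) <;>
    fun_prop

theorem mem_kuhnStar_floor (y : ι → ℝ) : y ∈ kuhnStar fun i => ⌊y i⌋ := by
  have h₀ (i : ι) : 0 ≤ y i - ⌊y i⌋ := by linarith [Int.floor_le (y i)]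
  have h₁ (i : ι) : y i - ⌊y i⌋ < 1 := by linarith [Int.lt_floor_add_one (y i)]
  refine ⟨fun i => abs_lt.mpr ⟨by linarith [h₀ i], h₁ i⟩, fun i j => ?_⟩
  linarith [h₀ i, h₁ j]

theorem dist_lt_two_of_mem_kuhnStar [Fintype ι] {v : ι → ℤ} {y y' : ι → ℝ}
    (hy : y ∈ kuhnStar v) (hy' : y' ∈ kuhnStar v) : dist y y' < 2 := by
  refine (dist_pi_lt_iff two_pos).mpr fun i => ?_
  have := abs_lt.mp (hy.1 i)
  have := abs_lt.mp (hy'.1 i)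
  rw [Real.dist_eq, abs_lt]
  constructor <;> linarith

theorem eq_of_mem_kuhnStar_of_lt_iff {y : ι → ℝ} {v v' : ι → ℤ} (hv : y ∈ kuhnStar v)
    (hv' : y ∈ kuhnStar v') (h : ∀ i, y i < v i ↔ y i < v' i) : v = v' := by
  funext i
  have := abs_lt.mp (hv.1 i)
  have := abs_lt.mp (hv'.1 i)
  have hlt : (v i : ℝ) < v' i + 1 := by by_cases y i < v i <;> grind
  have hgt : (v' i : ℝ) < v i + 1 := by by_cases y i < v i <;> grind
  have : v i < v' i + 1 := by exact_mod_cast hlt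
  have : v' i < v i + 1 := by exact_mod_cast hgt
  omega

variable [Fintype ι]

theorem filter_lt_subset_or_subset_of_mem_kuhnStar {y : ι → ℝ} {v v' : ι → ℤ} (hv : y ∈ kuhnStar v)
    (hv' : y ∈ kuhnStar v') :
    Finset.univ.filter (fun i => y i < v i) ⊆ Finset.univ.filter (fun i => y i < v' i) ∨
      Finset.univ.filter (fun i => y i < v' i) ⊆ Finset.univ.filter (fun i => y i < v i) := by
  by_contra! h
  obtain ⟨i, hi, hi'⟩ := Finset.not_subset.mp h.1
  obtain ⟨j, hj', hj⟩ := Finset.not_subset.mp h.2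
  simp only [Finset.mem_filter, Finset.mem_univ, true_and, not_lt] at hi hi' hj hj'
  have hvi : (v' i : ℝ) + 1 ≤ v i := by
    have : v' i < v i := by exact_mod_cast (show (v' i : ℝ) < v i by linarith)
    exact_mod_cast this
  have hvj : (v j : ℝ) + 1 ≤ v' j := by
    have : v j < v' j := by exact_mod_cast (show (v j : ℝ) < v' j by linarith)
    exact_mod_cast this
  linarith [hv.2 i j, hv'.2 j i]

theorem ncard_setOf_mem_kuhnStar_le (y : ι → ℝ) :
    {v : ι → ℤ | y ∈ kuhnStar v}.Finite ∧
      {v : ι → ℤ | y ∈ kuhnStar v}.ncard ≤ Fintype.card ι + 1 := by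
  set rank : (ι → ℤ) → ℕ := fun v => (Finset.univ.filter fun i => y i < v i).card
  have hmaps : MapsTo rank {v | y ∈ kuhnStar v} (Finset.range (Fintype.card ι + 1)) :=
    fun v _ => Finset.mem_coe.mpr (Finset.mem_range_succ_iff.mpr (Finset.card_le_univ _))
  have hinj : InjOn rank {v | y ∈ kuhnStar v} := by
    intro v hv v' hv' hrank
    refine eq_of_mem_kuhnStar_of_lt_iff hv hv' fun i => ?_
    have hfilter : Finset.univ.filter (fun i => y i < v i) =
        Finset.univ.filter (fun i => y i < v' i) := by
      rcases filter_lt_subset_or_subset_of_mem_kuhnStar hv hv' with hsub | hsub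
      · exact Finset.eq_of_subset_of_card_le hsub hrank.ge
      · exact (Finset.eq_of_subset_of_card_le hsub hrank.le).symm
    simpa using congrArg (i ∈ ·) hfilter
  refine ⟨Finite.of_injOn hmaps hinj (Finset.finite_toSet _), ?_⟩
  simpa using ncard_le_ncard_of_injOn rank hmaps hinj (Finset.finite_toSet _)

end KuhnStar

theorem ncard_mem_iUnion_image_inter_le {X ι : Type*} {A : ι → Set X} {𝒲 : ι → Set (Set X)}
    (hdisj : ∀ v, (𝒲 v).PairwiseDisjoint id) {x : X} (hfin : {v | x ∈ A v}.Finite) :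
    {S ∈ ⋃ v, (· ∩ A v) '' 𝒲 v | x ∈ S}.Finite ∧
      {S ∈ ⋃ v, (· ∩ A v) '' 𝒲 v | x ∈ S}.ncard ≤ {v | x ∈ A v}.ncard := by
  cases isEmpty_or_nonempty ι
  · simp
  have hindex : ∀ S ∈ {S ∈ ⋃ v, (· ∩ A v) '' 𝒲 v | x ∈ S},
      ∃ v, ∃ W ∈ 𝒲 v, W ∩ A v = S := fun S hS => by simpa using hS.1
  choose! index W hW hWS using hindex
  have hmaps : MapsTo index {S ∈ ⋃ v, (· ∩ A v) '' 𝒲 v | x ∈ S} {v | x ∈ A v} :=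
    fun S hS => ((hWS S hS).symm ▸ hS.2).2
  have hinj : InjOn index {S ∈ ⋃ v, (· ∩ A v) '' 𝒲 v | x ∈ S} := by
    intro S hS S' hS' hindex
    have hxW : x ∈ W S := ((hWS S hS).symm ▸ hS.2).1
    have hxW' : x ∈ W S' := ((hWS S' hS').symm ▸ hS'.2).1
    rw [← hWS S hS, ← hWS S' hS', hindex,
      (hdisj _).elim_set (hW S hS) (hindex ▸ hW S' hS') x hxW hxW']
  exact ⟨Finite.of_injOn hmaps hinj hfin, ncard_le_ncard_of_injOn index hmaps hinj hfin⟩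

theorem covDimLENat_of_fibers_covDimLE_zero {X ι : Type*} [TopologicalSpace X]
    [TopologicalSpace.MetrizableSpace X] [CompactSpace X] [Fintype ι] {f : X → ι → ℝ}
    (hf : Continuous f) (hfib : ∀ w, CovDimLE (f ⁻¹' {w}) 0) :
    CovDimLENat X (Fintype.card ι) := by
  let := TopologicalSpace.metrizableSpaceMetric X
  intro 𝒰 hfin hopen hcov
  choose O hO hwO 𝒲 h𝒲open h𝒲ref h𝒲disj h𝒲cov using
    fun w => exists_nhds_fiber_pairwiseDisjoint_refinement hf (hfib w) hfin hopen hcov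
  obtain ⟨δ, hδ, hleb⟩ := lebesgue_number_lemma_of_metric (isCompact_range hf) hO
    fun w _ => mem_iUnion.mpr ⟨w, hwO w⟩
  -- the stars have diameter `< 2`, so after rescaling by `2 / δ` they are Lebesgue-small
  set A : (ι → ℤ) → Set X := fun v => (fun x => (2 / δ) • f x) ⁻¹' kuhnStar v
  have hA : ∀ v, ∃ w, A v ⊆ f ⁻¹' O w := by
    intro v
    rcases (A v).eq_empty_or_nonempty with hempty | ⟨q, hq⟩
    · exact ⟨0, hempty.symm ▸ empty_subset _⟩
    obtain ⟨w, hw⟩ := hleb (f q) ⟨q, rfl⟩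
    refine ⟨w, fun x hx => hw (mem_ball.mpr ?_)⟩
    have h2 := dist_lt_two_of_mem_kuhnStar hx hq
    rw [dist_smul₀, Real.norm_of_nonneg (by positivity), div_mul_eq_mul_div, div_lt_iff₀ hδ] at h2
    linarith
  choose w hw using hA
  refine ⟨⋃ v, (· ∩ A v) '' 𝒲 (w v), ?_, ?_, ?_, fun x => ?_⟩
  · simp only [mem_iUnion, mem_image]
    rintro _ ⟨v, W, hW, rfl⟩
    exact (h𝒲open _ W hW).inter ((isOpen_kuhnStar v).preimage (by fun_prop))
  · refine eq_univ_of_forall fun x => ?_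
    set v : ι → ℤ := fun i => ⌊(2 / δ) • f x i⌋
    have hxA : x ∈ A v := mem_kuhnStar_floor _
    obtain ⟨W, hW, hxW⟩ := h𝒲cov (w v) (hw v hxA)
    exact ⟨W ∩ A v, mem_iUnion.mpr ⟨v, W, hW, rfl⟩, hxW, hxA⟩
  · simp only [mem_iUnion, mem_image]
    rintro _ ⟨v, W, hW, rfl⟩
    obtain ⟨U, hU, hWU⟩ := h𝒲ref _ W hW
    exact ⟨U, hU, inter_subset_left.trans hWU⟩
  · obtain ⟨hfin, hcard⟩ := ncard_setOf_mem_kuhnStar_le ((2 / δ) • f x)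
    obtain ⟨hfin', hcard'⟩ := ncard_mem_iUnion_image_inter_le (A := A) (x := x)
      (fun v => h𝒲disj (w v)) hfin
    exact ⟨hfin', hcard'.trans hcard⟩

theorem covDimLENat_fiber_of_fibers_prod_covDimLE_zero {Q B ι : Type*} [TopologicalSpace Q]
    [TopologicalSpace.MetrizableSpace Q] [CompactSpace Q] [TopologicalSpace B] [T1Space B]
    [Fintype ι] {φ : Q → B} {ψ : Q → ι → ℝ} (hφ : Continuous φ) (hψ : Continuous ψ)
    (hfib : ∀ z, CovDimLE ((fun q => (φ q, ψ q)) ⁻¹' {z}) 0) (b : B) :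
    CovDimLENat (φ ⁻¹' {b}) (Fintype.card ι) := by
  have : CompactSpace (φ ⁻¹' {b}) :=
    isCompact_iff_compactSpace.mp (isClosed_singleton.preimage hφ).isCompact
  refine covDimLENat_of_fibers_covDimLE_zero (hψ.comp continuous_subtype_val) fun w => ?_
  have hrange : range (fun a : ((ψ ∘ Subtype.val) ⁻¹' {w} : Set (φ ⁻¹' {b})) => (a : Q)) =
      (fun q => (φ q, ψ q)) ⁻¹' {(b, w)} := by
    ext q
    simp [Prod.ext_iff, and_comm]
  exact (hfib (b, w)).of_homeomorph
    ((IsEmbedding.subtypeVal.comp IsEmbedding.subtypeVal).toHomeomorph.trans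
      (Homeomorph.setCongr hrange))

section Truncation

variable {n k : ℕ}

def euclideanTruncate (hk : k ≤ n) : C(EuclideanSpace ℝ (Fin n), EuclideanSpace ℝ (Fin k)) where
  toFun y := WithLp.toLp 2 fun i => y (Fin.castLE hk i)

def euclideanPad (n : ℕ) : C(EuclideanSpace ℝ (Fin k), EuclideanSpace ℝ (Fin n)) where
  toFun z := WithLp.toLp 2 fun j => if h : (j : ℕ) < k then z ⟨j, h⟩ else 0
  continuous_toFun := PiLp.continuous_toLp _ _ |>.comp <| continuous_pi fun j => by
    split_ifs <;> fun_prop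

def euclideanTail (k : ℕ) : C(EuclideanSpace ℝ (Fin n), Fin (n - k) → ℝ) where
  toFun y i := y ⟨k + i, by omega⟩

theorem euclideanTruncate_pad (hk : k ≤ n) (z : EuclideanSpace ℝ (Fin k)) :
    euclideanTruncate hk (euclideanPad n z) = z := by
  ext i
  simp [euclideanTruncate, euclideanPad]

theorem dist_euclideanTruncate_le (hk : k ≤ n) (y y' : EuclideanSpace ℝ (Fin n)) :
    dist (euclideanTruncate hk y) (euclideanTruncate hk y') ≤ dist y y' := by
  rw [EuclideanSpace.dist_eq, EuclideanSpace.dist_eq]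
  refine Real.sqrt_le_sqrt ?_
  exact (Finset.sum_map Finset.univ (Fin.castLEEmb hk) fun j => dist (y j) (y' j) ^ 2).symm.le.trans
    (Finset.sum_le_sum_of_subset_of_nonneg (Finset.subset_univ _) fun _ _ _ => sq_nonneg _)

theorem injective_euclideanTruncate_prod_tail (hk : k ≤ n) :
    Function.Injective fun y : EuclideanSpace ℝ (Fin n) =>
      (euclideanTruncate hk y, euclideanTail k y) := by
  intro y y' h
  simp only [Prod.mk.injEq] at h
  ext j
  by_cases hj : (j : ℕ) < k
  · simpa [euclideanTruncate] using congrArg (· ⟨j, hj⟩) h.1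
  · simpa [euclideanTail, Nat.add_sub_cancel' (not_lt.mp hj)] using
      congrFun h.2 ⟨j - k, by omega⟩

end Truncation

theorem statement18_general {K : Type*} [TopologicalSpace K] [CompactSpace K]
    [TopologicalSpace.MetrizableSpace K]
    (n k : ℕ) (hk : k ≤ n) (m : ℕ)
    (happrox : ∀ h₁ : C((Fin m → unitInterval) × K, EuclideanSpace ℝ (Fin n)),
      ∀ η : ℝ, 0 < η →
        ∃ g₁ : C((Fin m → unitInterval) × K, EuclideanSpace ℝ (Fin n)),
          (∀ q, dist (g₁ q) (h₁ q) ≤ η) ∧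
          ∀ z : (Fin m → unitInterval) × EuclideanSpace ℝ (Fin n),
            CovDimLE ((fun q : (Fin m → unitInterval) × K => (q.1, g₁ q)) ⁻¹' {z}) 0) :
    ∀ h : C((Fin m → unitInterval) × K, EuclideanSpace ℝ (Fin k)),
      ∀ ε : ℝ, 0 < ε →
        ∃ g : C((Fin m → unitInterval) × K, EuclideanSpace ℝ (Fin k)),
          (∀ q, dist (g q) (h q) ≤ ε) ∧
          ∀ z : (Fin m → unitInterval) × EuclideanSpace ℝ (Fin k),
            CovDimLE ((fun q : (Fin m → unitInterval) × K => (q.1, g q)) ⁻¹' {z})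
              ((n : ℤ) - k) := by
  intro h ε hε
  obtain ⟨g₁, hdist, hfib⟩ := happrox ((euclideanPad n).comp h) ε hε
  refine ⟨(euclideanTruncate hk).comp g₁, fun q => ?_, fun z => ?_⟩
  · calc dist (euclideanTruncate hk (g₁ q)) (h q)
        = dist (euclideanTruncate hk (g₁ q)) (euclideanTruncate hk (euclideanPad n (h q))) := by
          rw [euclideanTruncate_pad]
      _ ≤ dist (g₁ q) (euclideanPad n (h q)) := dist_euclideanTruncate_le hk _ _
      _ ≤ ε := hdist q
  -- the fibers of `(π × g, tail ∘ g₁)` are fibers of `π × g₁`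
  have hsplit : Function.Injective fun p : (Fin m → unitInterval) × EuclideanSpace ℝ (Fin n) =>
      ((p.1, euclideanTruncate hk p.2), euclideanTail k p.2) := by
    rintro ⟨t, y⟩ ⟨t', y'⟩ h
    simp only [Prod.mk.injEq] at h
    rw [injective_euclideanTruncate_prod_tail hk (Prod.ext h.1.2 h.2), h.1.1]
  refine Or.inr ⟨Fintype.card (Fin (n - k)), by rw [Fintype.card_fin]; omega, ?_⟩
  exact covDimLENat_fiber_of_fibers_prod_covDimLE_zero (by fun_prop)
    ((euclideanTail k).continuous.comp g₁.continuous)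
    (covDimLE_fiber_comp_of_injective hsplit hfib) z

/-- Reduction of Proposition 4.4 to the case `k = n`: if every map
`𝕀^m × K → ℝ^n` can be uniformly approximated by maps `g₁` with `π × g₁`
0-dimensional, then every map `𝕀^m × K → ℝ^k` can be uniformly approximated by maps `g`
with `π × g` `(n - k)`-dimensional. -/
theorem statement18 {K : Type*} [TopologicalSpace K] [CompactSpace K]
    [TopologicalSpace.MetrizableSpace K]
    (n k : ℕ) (hk : k ≤ n) (hK : CovDimLENat K n) (m : ℕ) (hm : 1 ≤ m)
    (happrox : ∀ h₁ : C((Fin m → unitInterval) × K, EuclideanSpace ℝ (Fin n)),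
      ∀ η : ℝ, 0 < η →
        ∃ g₁ : C((Fin m → unitInterval) × K, EuclideanSpace ℝ (Fin n)),
          (∀ q, dist (g₁ q) (h₁ q) ≤ η) ∧
          ∀ z : (Fin m → unitInterval) × EuclideanSpace ℝ (Fin n),
            CovDimLE ((fun q : (Fin m → unitInterval) × K => (q.1, g₁ q)) ⁻¹' {z}) 0) :
    ∀ h : C((Fin m → unitInterval) × K, EuclideanSpace ℝ (Fin k)),
      ∀ ε : ℝ, 0 < ε →
        ∃ g : C((Fin m → unitInterval) × K, EuclideanSpace ℝ (Fin k)),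
          (∀ q, dist (g q) (h q) ≤ ε) ∧
          ∀ z : (Fin m → unitInterval) × EuclideanSpace ℝ (Fin k),
            CovDimLE ((fun q : (Fin m → unitInterval) × K => (q.1, g q)) ⁻¹' {z})
              ((n : ℤ) - k) :=
  statement18_general n k hk m happrox
end
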